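/- arXiv:1808.10168 — 4 statements merged into one kernel-verified Lean document; each statement's English description precedes it below -/
import Mathlib

section
/- For every λ > 0 and every s > 0, (1+s)^{-λ} ≤ Σ_{k=1}^∞ 2^{-k} · 𝟙_{[0,1]}(s / 2^{k/λ}), where 𝟙_{[0,1]} is the characteristic function of the interval [0,1]. -/
/-!
Let `n = ⌊L log₂ (1 + s)⌋`. Then `2 ^ (n / L) ≤ 1 + s`, so `(1 + s) ^ (-L) ≤ 2 ^ (-n)`. On the
other hand `s < 1 + s < 2 ^ ((k + 1) / L)` for every `k ≥ n`, so from index `n` on every indicator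
equals one and the tail of the series is the geometric series `∑_{k ≥ n} 2 ^ (-(k + 1)) = 2 ^ (-n)`.
-/

open Real

lemma two_rpow_neg_natCast_add_one (k : ℕ) : (2 : ℝ) ^ (-((k : ℝ) + 1)) = (1 / 2) ^ (k + 1) := by
  rw [rpow_neg zero_le_two, ← Nat.cast_succ, rpow_natCast, one_div, inv_pow]

lemma tsum_two_rpow_neg_nat_add (n : ℕ) :
    ∑' k : ℕ, (2 : ℝ) ^ (-(((k + n : ℕ) : ℝ) + 1)) = 2 ^ (-(n : ℝ)) := by
  have h (k : ℕ) : (2 : ℝ) ^ (-(((k + n : ℕ) : ℝ) + 1)) = 2 ^ (-(n : ℝ)) / 2 / 2 ^ k := by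
    rw [two_rpow_neg_natCast_add_one, rpow_neg zero_le_two, rpow_natCast]
    simp only [one_div, inv_pow, pow_succ, pow_add]
    field_simp
  simp_rw [h, tsum_geometric_two']

lemma summable_two_rpow_neg_mul {φ : ℕ → ℝ} (hφ₀ : ∀ k, 0 ≤ φ k) (hφ₁ : ∀ k, φ k ≤ 1) :
    Summable fun k : ℕ => (2 : ℝ) ^ (-((k : ℝ) + 1)) * φ k := by
  refine Summable.of_nonneg_of_le (fun k => mul_nonneg (by positivity) (hφ₀ k)) (fun k => ?_)
    ((summable_nat_add_iff 1).2 summable_geometric_two)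
  rw [← two_rpow_neg_natCast_add_one]
  exact mul_le_of_le_one_right (by positivity) (hφ₁ k)

lemma rpow_neg_le_rpow_neg_of_rpow_div_le {b x t L : ℝ} (hb : 0 < b) (hL : 0 < L)
    (h : b ^ (t / L) ≤ x) : x ^ (-L) ≤ b ^ (-t) := calc
  x ^ (-L) ≤ (b ^ (t / L)) ^ (-L) := rpow_le_rpow_of_nonpos (by positivity) h (by linarith)
  _ = b ^ (-t) := by rw [← rpow_mul hb.le]; field_simp

lemma indicator_Icc_zero_one_div_of_le {s c : ℝ} (hs : 0 ≤ s) (hsc : s ≤ c) :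
    Set.indicator (Set.Icc (0 : ℝ) 1) (fun _ => (1 : ℝ)) (s / c) = 1 :=
  Set.indicator_of_mem (show s / c ∈ Set.Icc (0 : ℝ) 1 from
    ⟨div_nonneg hs (hs.trans hsc), div_le_one_of_le₀ hsc (hs.trans hsc)⟩) _

/-- For `λ, s > 0`,
`(1+s)^{-λ} ≤ Σ_{k=1}^∞ 2^{-k} 𝟙_{[0,1]}(s / 2^{k/λ})`. -/
theorem one_add_rpow_neg_le_tsum_indicator (L s : ℝ) (hL : 0 < L) (hs : 0 < s) :
    (1 + s) ^ (-L) ≤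
      ∑' k : ℕ, (2 : ℝ) ^ (-((k : ℝ) + 1)) *
        Set.indicator (Set.Icc (0 : ℝ) 1) (fun _ => (1 : ℝ))
          (s / 2 ^ (((k : ℝ) + 1) / L)) := by
  set g : ℕ → ℝ := fun k => (2 : ℝ) ^ (-((k : ℝ) + 1)) *
    Set.indicator (Set.Icc (0 : ℝ) 1) (fun _ => (1 : ℝ)) (s / 2 ^ (((k : ℝ) + 1) / L))
  have hg_nonneg (k : ℕ) : 0 ≤ g k :=
    mul_nonneg (by positivity) (Set.indicator_nonneg (fun _ _ => zero_le_one) _)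
  have hg_summable : Summable g :=
    summable_two_rpow_neg_mul (fun _ => Set.indicator_nonneg (fun _ _ => zero_le_one) _)
      (fun _ => Set.indicator_le_self' (fun _ _ => zero_le_one) _)
  set n := ⌊L * logb 2 (1 + s)⌋₊
  have h_log : 0 ≤ L * logb 2 (1 + s) := mul_nonneg hL.le (logb_nonneg one_lt_two (by linarith))
  have h_head : (1 + s) ^ (-L) ≤ 2 ^ (-(n : ℝ)) := by
    refine rpow_neg_le_rpow_neg_of_rpow_div_le two_pos hL ?_
    rw [← le_logb_iff_rpow_le one_lt_two (by linarith), div_le_iff₀' hL]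
    exact Nat.floor_le h_log
  have h_tail (k : ℕ) : g (k + n) = 2 ^ (-(((k + n : ℕ) : ℝ) + 1)) := by
    have h_lt : 1 + s < 2 ^ ((((k + n : ℕ) : ℝ) + 1) / L) := by
      rw [← logb_lt_iff_lt_rpow one_lt_two (by linarith), lt_div_iff₀' hL]
      have := Nat.lt_floor_add_one (L * logb 2 (1 + s))
      push_cast
      linarith
    simp only [g, indicator_Icc_zero_one_div_of_le hs.le (by linarith), mul_one]
  calc (1 + s) ^ (-L) ≤ 2 ^ (-(n : ℝ)) := h_head
    _ = ∑' k, g (k + n) := by rw [tsum_congr h_tail, tsum_two_rpow_neg_nat_add]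
    _ ≤ ∑' k, g k := tsum_comp_le_tsum_of_inj hg_summable hg_nonneg (add_left_injective n)
end

section
/- Fix x₀ ∈ X (a metric space). The function φ(x,t) := t / (ln(e + d(x,x₀)) + ln(e + t)) is of uniformly upper type 1 and of uniformly lower type p for every p ∈ (0,1): that is, for each p ∈ (0,1) there exists C_p > 0 such that φ(x, st) ≤ C_p s^p φ(x,t) for all x ∈ X, s ∈ [0,1], t ≥ 0, and there exists C > 0 such that φ(x, st) ≤ C s φ(x,t) for all x ∈ X, s ∈ [1,∞), t ≥ 0. Moreover, φ is not of uniformly lower type 1. -/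
/-!
Write `φ(x,t) = t / (A + ln(e+t))` with `A = ln(e + d(x,x₀)) ≥ 1`. Upper type 1 holds with `C = 1`
because the denominator is increasing in `t`. For `s ≤ 1` one has `s(e+t) ≤ e+st`, so the
denominator grows by at most `-ln s` when `st` is replaced by `t`; since `s^(1-p) (-ln s)` is bounded
by `1/(1-p)`, this loss is absorbed by `s^(1-p)`, giving lower type `p`. Lower type 1 fails at
`x = x₀`: `φ(x₀,t)/t = 1/(1 + ln(e+t)) → 0` while `φ(x₀,1) > 0`.
-/

open Real Filter Topology

/-- The growth function `φ(x,t) = t / (ln(e + d(x,x₀)) + ln(e + t))`. -/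
noncomputable def logGrowth {X : Type*} [MetricSpace X] (x₀ : X) (x : X) (t : ℝ) : ℝ :=
  t / (Real.log (Real.exp 1 + dist x x₀) + Real.log (Real.exp 1 + t))

noncomputable def logQuotient (a t : ℝ) : ℝ :=
  t / (a + log (exp 1 + t))

lemma logGrowth_eq_logQuotient {X : Type*} [MetricSpace X] (x₀ x : X) (t : ℝ) :
    logGrowth x₀ x t = logQuotient (log (exp 1 + dist x x₀)) t :=
  rfl

lemma one_le_log_exp_one_add {t : ℝ} (ht : 0 ≤ t) : 1 ≤ log (exp 1 + t) := by
  simpa using log_le_log (exp_pos 1) (le_add_of_nonneg_right ht)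

lemma logQuotient_mul_le_of_one_le {a s t : ℝ} (ha : 0 ≤ a) (hs : 1 ≤ s) (ht : 0 ≤ t) :
    logQuotient a (s * t) ≤ s * logQuotient a t := by
  have hlog_mono : log (exp 1 + t) ≤ log (exp 1 + s * t) :=
    log_le_log (by positivity) (by nlinarith)
  have hlog_pos := one_le_log_exp_one_add ht
  rw [logQuotient, logQuotient, ← mul_div_assoc]
  exact div_le_div_of_nonneg_left (by positivity) (by linarith) (by linarith)

lemma log_exp_one_add_le_sub_log {s t : ℝ} (hs0 : 0 < s) (hs1 : s ≤ 1) (ht : 0 ≤ t) :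
    log (exp 1 + t) ≤ log (exp 1 + s * t) - log s := by
  have hscale : s * (exp 1 + t) ≤ exp 1 + s * t := by nlinarith [exp_pos 1]
  have := log_le_log (by positivity) hscale
  rw [log_mul hs0.ne' (by positivity)] at this
  linarith

lemma rpow_mul_add_log_exp_one_add_le {a q s t : ℝ} (ha : 0 ≤ a) (hq : 0 < q) (hs0 : 0 < s)
    (hs1 : s ≤ 1) (ht : 0 ≤ t) :
    s ^ q * (a + log (exp 1 + t)) ≤ (1 + 1 / q) * (a + log (exp 1 + s * t)) := by
  have hshift := log_exp_one_add_le_sub_log hs0 hs1 ht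
  have hlog_pos := one_le_log_exp_one_add (mul_nonneg hs0.le ht)
  have hloss : s ^ q * -log s ≤ 1 / q := by
    have := abs_log_mul_self_rpow_lt s q hs0 hs1 hq
    rw [abs_lt] at this
    linarith
  have hsq_le : s ^ q ≤ 1 := rpow_le_one hs0.le hs1 hq.le
  have hsq_nonneg : 0 ≤ s ^ q := rpow_nonneg hs0.le q
  have hq_inv : 0 < 1 / q := by positivity
  calc s ^ q * (a + log (exp 1 + t))
      ≤ s ^ q * (a + log (exp 1 + s * t)) + s ^ q * -log s := by nlinarith
    _ ≤ (a + log (exp 1 + s * t)) + 1 / q := by nlinarith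
    _ ≤ (1 + 1 / q) * (a + log (exp 1 + s * t)) := by nlinarith

lemma logQuotient_mul_le_rpow {a p s t : ℝ} (ha : 0 ≤ a) (hp : 0 < p) (hp1 : p < 1) (hs0 : 0 ≤ s)
    (hs1 : s ≤ 1) (ht : 0 ≤ t) :
    logQuotient a (s * t) ≤ (1 + 1 / (1 - p)) * s ^ p * logQuotient a t := by
  rcases hs0.eq_or_lt with rfl | hs_pos
  · simp [logQuotient, zero_rpow hp.ne']
  have hkey := rpow_mul_add_log_exp_one_add_le ha (sub_pos.mpr hp1) hs_pos hs1 ht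
  have hsplit : s = s ^ (1 - p) * s ^ p := by
    rw [← rpow_add hs_pos, sub_add_cancel, rpow_one]
  have hD_st := one_le_log_exp_one_add (mul_nonneg hs_pos.le ht)
  have hD_t := one_le_log_exp_one_add ht
  unfold logQuotient
  rw [mul_div_assoc', div_le_div_iff₀ (by linarith) (by linarith)]
  calc s * t * (a + log (exp 1 + t))
      = s ^ (1 - p) * (a + log (exp 1 + t)) * (s ^ p * t) := by
        conv_lhs => rw [hsplit]
        ring
    _ ≤ (1 + 1 / (1 - p)) * (a + log (exp 1 + s * t)) * (s ^ p * t) :=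
        mul_le_mul_of_nonneg_right hkey (by positivity)
    _ = (1 + 1 / (1 - p)) * s ^ p * t * (a + log (exp 1 + s * t)) := by ring

lemma tendsto_inv_mul_logQuotient_atTop (a : ℝ) :
    Tendsto (fun t => t⁻¹ * logQuotient a t) atTop (𝓝 0) := by
  have hden : Tendsto (fun t => a + log (exp 1 + t)) atTop atTop :=
    tendsto_atTop_add_const_left _ a
      (tendsto_log_atTop.comp (tendsto_atTop_add_const_left _ (exp 1) tendsto_id))
  refine hden.inv_tendsto_atTop.congr' ?_
  filter_upwards [eventually_gt_atTop 0] with t ht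
  rw [Pi.inv_apply, logQuotient, inv_mul_eq_div, div_div_cancel_left' ht.ne']

lemma exists_mul_inv_mul_logQuotient_lt {a : ℝ} (ha : 0 ≤ a) (C : ℝ) :
    ∃ t, 1 ≤ t ∧ C * t⁻¹ * logQuotient a t < logQuotient a 1 := by
  have hpos : 0 < logQuotient a 1 := by
    have := one_le_log_exp_one_add zero_le_one
    exact div_pos one_pos (by linarith)
  have hsmall : ∀ᶠ t in atTop, C * (t⁻¹ * logQuotient a t) < logQuotient a 1 := by
    have := (tendsto_inv_mul_logQuotient_atTop a).const_mul C
    rw [mul_zero] at this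
    exact this.eventually_lt_const hpos
  obtain ⟨t, ht, ht1⟩ := (hsmall.and (eventually_ge_atTop 1)).exists
  exact ⟨t, ht1, by rwa [mul_assoc]⟩

theorem logGrowth_type_properties_general
    {X : Type*} [MetricSpace X] (x₀ : X) :
    (∃ C : ℝ, 0 < C ∧ ∀ (x : X) (s t : ℝ), 1 ≤ s → 0 ≤ t →
      logGrowth x₀ x (s * t) ≤ C * s * logGrowth x₀ x t) ∧
    (∀ p : ℝ, 0 < p → p < 1 → ∃ C : ℝ, 0 < C ∧ ∀ (x : X) (s t : ℝ),
      0 ≤ s → s ≤ 1 → 0 ≤ t →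
      logGrowth x₀ x (s * t) ≤ C * s ^ p * logGrowth x₀ x t) ∧
    ¬ ∃ C : ℝ, 0 < C ∧ ∀ (x : X) (s t : ℝ), 0 ≤ s → s ≤ 1 → 0 ≤ t →
      logGrowth x₀ x (s * t) ≤ C * s * logGrowth x₀ x t := by
  have hA : ∀ x : X, 0 ≤ log (exp 1 + dist x x₀) := fun x =>
    zero_le_one.trans (one_le_log_exp_one_add dist_nonneg)
  refine ⟨⟨1, one_pos, fun x s t hs ht => ?_⟩, fun p hp hp1 => ?_, ?_⟩
  · simpa only [one_mul, logGrowth_eq_logQuotient] using logQuotient_mul_le_of_one_le (hA x) hs ht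
  · have hp' : 0 < 1 - p := sub_pos.mpr hp1
    exact ⟨1 + 1 / (1 - p), by positivity, fun x s t hs0 hs1 ht =>
      logQuotient_mul_le_rpow (hA x) hp hp1 hs0 hs1 ht⟩
  · rintro ⟨C, -, hC⟩
    obtain ⟨t, ht1, hlt⟩ := exists_mul_inv_mul_logQuotient_lt (hA x₀) C
    have ht0 : 0 < t := zero_lt_one.trans_le ht1
    have := hC x₀ t⁻¹ t (inv_nonneg.mpr ht0.le) (inv_le_one_of_one_le₀ ht1) ht0.le
    rw [inv_mul_cancel₀ ht0.ne'] at this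
    exact (this.trans_lt hlt).false

/-- `φ(x,t) = t/(ln(e+d(x,x₀)) + ln(e+t))` is of uniformly upper type 1,
of uniformly lower type `p` for every `p ∈ (0,1)`, but not of uniformly lower type 1. -/
theorem logGrowth_type_properties
    {X : Type*} [MetricSpace X] [Nonempty X] (x₀ : X) :
    (∃ C : ℝ, 0 < C ∧ ∀ (x : X) (s t : ℝ), 1 ≤ s → 0 ≤ t →
      logGrowth x₀ x (s * t) ≤ C * s * logGrowth x₀ x t) ∧
    (∀ p : ℝ, 0 < p → p < 1 → ∃ C : ℝ, 0 < C ∧ ∀ (x : X) (s t : ℝ),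
      0 ≤ s → s ≤ 1 → 0 ≤ t →
      logGrowth x₀ x (s * t) ≤ C * s ^ p * logGrowth x₀ x t) ∧
    ¬ ∃ C : ℝ, 0 < C ∧ ∀ (x : X) (s t : ℝ), 0 ≤ s → s ≤ 1 → 0 ≤ t →
      logGrowth x₀ x (s * t) ≤ C * s * logGrowth x₀ x t :=
  logGrowth_type_properties_general x₀
end

section
/- Let (X,d,μ) be a doubling metric measure space with μ(X) < ∞, let φ be a growth function, q ∈ (1,∞], p₁ ∈ (0,1], and suppose φ is of uniformly upper type p₁ and φ ∈ ℝℍ_{(q/p₁)'}(X) (uniform reverse Hölder with exponent (q/p₁)'). Let α ∈ L^q(X) satisfy ‖α‖_{L^q(X)} ≤ μ(X)^{1/q} ‖𝟙_X‖_{L^φ(X)}^{-1}, and let T be a sublinear operator with |Tα| ≤ C₀ M(α) pointwise, where M is the Hardy–Littlewood maximal operator. Then there is a constant C, independent of α, such that for every λ ∈ ℂ, ∫_X φ(x, |λ| |Tα(x)|) dμ(x) ≤ C φ(X, |λ| ‖𝟙_X‖_{L^φ(X)}^{-1}), where φ(X,t) := ∫_X φ(x,t) dμ(x). -/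
open MeasureTheory Metric Filter
open scoped ENNReal

/-- The Luxemburg quasi-norm, valued in `ℝ≥0∞`. -/
noncomputable def luxNorm {X : Type*} [MeasurableSpace X] (μ : Measure X)
    (φ : X → ℝ → ℝ) (g : X → ℝ) : ℝ≥0∞ :=
  ⨅ (l : ℝ) (_ : 0 < l) (_ : ∫⁻ x, ENNReal.ofReal (φ x (|g x| / l)) ∂μ ≤ 1),
    ENNReal.ofReal l

/-- The uncentered Hardy–Littlewood maximal function. -/
noncomputable def maximalFn {X : Type*} [MetricSpace X] [MeasurableSpace X]
    (μ : Measure X) (f : X → ℝ≥0∞) (x : X) : ℝ≥0∞ :=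
  ⨆ (z : X) (r : ℝ) (_ : 0 < r) (_ : x ∈ ball z r),
    (∫⁻ y in ball z r, f y ∂μ) / μ (ball z r)

open Set Topology
open scoped NNReal

/-!
Put `a = ‖𝟙_X‖_{L^φ}⁻¹` and `t = |λ| a`. Since `φ` has upper type `p₁`,
`φ(x, |λ| |Tα x|) ≲ ((|Tα x| / a) ^ p₁ + 1) φ(x, t)`, and `|Tα| ≤ C₀ Mα`, so everything reduces to
bounding `∫ (Mα) ^ p₁ φ(·, t)` by a multiple of `a ^ p₁ φ(X, t)`. Hölder's inequality with
exponents `q / p₁` and `(q / p₁)'`, followed by the reverse Hölder inequality on `X` (a ball, as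
`μ` is doubling and finite), bounds it by `‖Mα‖_q ^ p₁ μ(X) ^ (-p₁ / q) φ(X, t)`. Finally `M` is
bounded on `L^q` (weak type `(1,1)` by Vitali covering, then the layer-cake formula), and
`‖α‖_q ≤ μ(X) ^ (1/q) a`.
-/

section Doubling

variable {X : Type*} [MetricSpace X] [MeasurableSpace X]

def IsDoublingWith (μ : Measure X) (C : ℝ) : Prop :=
  ∀ (x : X) (r : ℝ), 0 < r → μ (ball x (2 * r)) ≤ ENNReal.ofReal C * μ (ball x r)

variable {μ : Measure X} {C : ℝ}

lemma IsDoublingWith.measure_ball_two_pow_mul_le (h : IsDoublingWith μ C) (x : X) {r : ℝ}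
    (hr : 0 < r) (n : ℕ) :
    μ (ball x (2 ^ n * r)) ≤ ENNReal.ofReal C ^ n * μ (ball x r) := by
  induction n with
  | zero => simp
  | succ n ih =>
    calc μ (ball x (2 ^ (n + 1) * r)) = μ (ball x (2 * (2 ^ n * r))) := by ring_nf
      _ ≤ ENNReal.ofReal C * μ (ball x (2 ^ n * r)) := h x _ (by positivity)
      _ ≤ ENNReal.ofReal C * (ENNReal.ofReal C ^ n * μ (ball x r)) := by gcongr
      _ = ENNReal.ofReal C ^ (n + 1) * μ (ball x r) := by ring

/-- If no ball about `x₀` is everything, then for each `R` a ball far from `x₀` carries a fixed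
fraction of the mass of `ball x₀ R`, and letting `R → ∞` gives `(1 + ε) μ univ ≤ μ univ`. -/
lemma IsDoublingWith.exists_ball_eq_univ [OpensMeasurableSpace X] (h : IsDoublingWith μ C)
    (hpos : ∀ (x : X) (r : ℝ), 0 < r → 0 < μ (ball x r)) (hμ : μ univ ≠ ⊤) (x₀ : X) :
    ∃ R, 0 < R ∧ ball x₀ R = univ := by
  by_contra! hne
  set K := ENNReal.ofReal C ^ 2
  have key : ∀ R : ℝ, 0 < R → (K + 1) * μ (ball x₀ R) ≤ K * μ univ := by
    intro R hR
    obtain ⟨y, hy⟩ := (ne_univ_iff_exists_notMem _).mp (hne (4 * R) (by positivity))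
    rw [mem_ball, not_lt] at hy
    set D := dist y x₀
    have hdisj : Disjoint (ball x₀ R) (ball y (D / 2)) := by
      refine disjoint_left.mpr fun w hw₁ hw₂ => ?_
      rw [mem_ball] at hw₁ hw₂
      linarith [dist_triangle y w x₀, dist_comm y w]
    have hsub : ball x₀ R ⊆ ball y (2 ^ 2 * (D / 2)) := fun w hw => by
      rw [mem_ball] at hw ⊢
      linarith [dist_triangle w x₀ y, dist_comm x₀ y]
    have hfar : μ (ball x₀ R) ≤ K * μ (ball y (D / 2)) :=
      (measure_mono hsub).trans (h.measure_ball_two_pow_mul_le y (by linarith) 2)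
    calc (K + 1) * μ (ball x₀ R) = K * μ (ball x₀ R) + μ (ball x₀ R) := by ring
      _ ≤ K * μ (ball x₀ R) + K * μ (ball y (D / 2)) := by gcongr
      _ = K * μ (ball x₀ R ∪ ball y (D / 2)) := by
        rw [measure_union hdisj measurableSet_ball, mul_add]
      _ ≤ K * μ univ := by gcongr; exact subset_univ _
  have hmono : Monotone fun n : ℕ => ball x₀ (n : ℝ) :=
    fun m n hmn => ball_subset_ball (Nat.cast_le.mpr hmn)
  have hsup : μ univ = ⨆ n : ℕ, μ (ball x₀ n) := by
    rw [← hmono.measure_iUnion, iUnion_ball_nat]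
  have hall : (K + 1) * μ univ ≤ K * μ univ := by
    conv_lhs => rw [hsup, ENNReal.mul_iSup]
    refine iSup_le fun n => ?_
    rcases Nat.eq_zero_or_pos n with rfl | hn
    · simp
    · exact key n (Nat.cast_pos.mpr hn)
  have hKμ : K * μ univ ≠ ⊤ := ENNReal.mul_ne_top (by simp [K]) hμ
  rw [add_mul, one_mul] at hall
  have : μ univ ≤ 0 := ENNReal.le_of_add_le_add_left hKμ (by simpa using hall)
  exact (hpos x₀ 1 one_pos).ne' (measure_mono_null (subset_univ _) (nonpos_iff_eq_zero.mp this))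

end Doubling

lemma Metric.ball_eq_univ_of_two_mul_le {X : Type*} [PseudoMetricSpace X] {x₀ : X} {R : ℝ}
    (h : ball x₀ R = univ) (z : X) {ρ : ℝ} (hρ : 2 * R ≤ ρ) : ball z ρ = univ := by
  refine eq_univ_of_forall fun w => mem_ball.mpr ?_
  have hw : w ∈ ball x₀ R := h ▸ mem_univ w
  have hz : z ∈ ball x₀ R := h ▸ mem_univ z
  rw [mem_ball] at hw hz
  linarith [dist_triangle_right w z x₀]

lemma Set.PairwiseDisjoint.countable_of_measure_pos {Ω ι : Type*} [MeasurableSpace Ω]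
    {μ : Measure Ω} [SFinite μ] {u : Set ι} {B : ι → Set Ω} (hB : ∀ i, MeasurableSet (B i))
    (hdisj : u.PairwiseDisjoint B) (hpos : ∀ i ∈ u, 0 < μ (B i)) : u.Countable := by
  have := Measure.countable_meas_pos_of_disjoint_iUnion (μ := μ) (fun i : u => hB i)
    fun i j hij => hdisj i.2 j.2 fun h => hij (Subtype.ext h)
  rw [eq_univ_of_forall fun i : u => mem_ofPred.mpr (hpos i i.2)] at this
  exact countable_coe_iff.mp (countable_univ_iff.mp this)

lemma lintegral_rpow_withDensity_ofReal_abs {Ω : Type*} [MeasurableSpace Ω] {μ : Measure Ω}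
    {α : Ω → ℝ} (hα : Measurable α) {c : ℝ} (hc : 0 ≤ c) {s : ℝ} (hs : 1 < s) :
    ∫⁻ y, ENNReal.ofReal ((c * |α y|) ^ (s - 1)) ∂μ.withDensity (fun y => ENNReal.ofReal |α y|) =
      ENNReal.ofReal c ^ (s - 1) * ∫⁻ y, ENNReal.ofReal |α y| ^ s ∂μ := by
  rw [lintegral_withDensity_eq_lintegral_mul _ hα.abs.ennreal_ofReal (by fun_prop),
    ← lintegral_const_mul' _ _ (by finiteness)]
  refine lintegral_congr fun y => ?_
  have hb := abs_nonneg (α y)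
  have hpow : |α y| * (c * |α y|) ^ (s - 1) = c ^ (s - 1) * |α y| ^ s := by
    rw [Real.mul_rpow hc hb, mul_left_comm, ← Real.rpow_one_add' hb (by linarith),
      add_sub_cancel]
  rw [Pi.mul_apply, ENNReal.ofReal_rpow_of_nonneg hc (by linarith),
    ENNReal.ofReal_rpow_of_nonneg hb (by linarith), ← ENNReal.ofReal_mul hb,
    ← ENNReal.ofReal_mul (by positivity), hpow]

section MaximalFunction

variable {X : Type*} [MetricSpace X] [MeasurableSpace X] {μ : Measure X}

lemma le_maximalFn (f : X → ℝ≥0∞) {z : X} {r : ℝ} (hr : 0 < r) {x : X} (hx : x ∈ ball z r) :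
    (∫⁻ y in ball z r, f y ∂μ) / μ (ball z r) ≤ maximalFn μ f x :=
  le_iSup_of_le z <| le_iSup_of_le r <| le_iSup_of_le hr <| le_iSup_of_le hx le_rfl

lemma lowerSemicontinuous_maximalFn (f : X → ℝ≥0∞) : LowerSemicontinuous (maximalFn μ f) := by
  intro x y hy
  simp only [maximalFn, lt_iSup_iff] at hy
  obtain ⟨z, r, hr, hx, hlt⟩ := hy
  filter_upwards [isOpen_ball.mem_nhds hx] with x' hx'
  exact hlt.trans_le (le_maximalFn f hr hx')

lemma measurable_maximalFn [OpensMeasurableSpace X] (f : X → ℝ≥0∞) :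
    Measurable (maximalFn μ f) :=
  (lowerSemicontinuous_maximalFn f).measurable

lemma maximalFn_congr_ae {f g : X → ℝ≥0∞} (h : f =ᵐ[μ] g) : maximalFn μ f = maximalFn μ g := by
  funext x
  simp only [maximalFn, lintegral_congr_ae (ae_restrict_of_ae h)]

lemma maximalFn_le_of_ae_le {f : X → ℝ≥0∞} {c : ℝ≥0∞} (h : ∀ᵐ y ∂μ, f y ≤ c) (x : X) :
    maximalFn μ f x ≤ c := by
  refine iSup₂_le fun z r => iSup₂_le fun _ _ => ENNReal.div_le_of_le_mul ?_
  calc ∫⁻ y in ball z r, f y ∂μ ≤ ∫⁻ _ in ball z r, c ∂μ := lintegral_mono_ae (ae_restrict_of_ae h)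
    _ = c * μ (ball z r) := by rw [setLIntegral_const]

lemma maximalFn_le_add [IsFiniteMeasure μ] (hpos : ∀ (x : X) (r : ℝ), 0 < r → 0 < μ (ball x r))
    {f g : X → ℝ≥0∞} {c : ℝ≥0∞} (hfg : ∀ y, f y ≤ g y + c) (x : X) :
    maximalFn μ f x ≤ maximalFn μ g x + c := by
  refine iSup₂_le fun z r => iSup₂_le fun hr hx => ?_
  have hb0 : μ (ball z r) ≠ 0 := (hpos z r hr).ne'
  calc (∫⁻ y in ball z r, f y ∂μ) / μ (ball z r)
      ≤ (∫⁻ y in ball z r, (g y + c) ∂μ) / μ (ball z r) := by gcongr with y; exact hfg y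
    _ = (∫⁻ y in ball z r, g y ∂μ) / μ (ball z r) + c * μ (ball z r) / μ (ball z r) := by
      rw [lintegral_add_right' _ aemeasurable_const, setLIntegral_const, ENNReal.add_div]
    _ ≤ maximalFn μ g x + c := by
      rw [mul_div_assoc, ENNReal.div_self hb0 (measure_ne_top μ _), mul_one]
      gcongr
      exact le_maximalFn g hr hx

/-- Radii can be capped at `2R` because every ball of radius `≥ 2R` is the whole space. -/
lemma subset_iUnion_ball_of_lt_maximalFn [IsFiniteMeasure μ]
    (hpos : ∀ (x : X) (r : ℝ), 0 < r → 0 < μ (ball x r))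
    {x₀ : X} {R : ℝ} (hR : 0 < R) (hXR : ball x₀ R = univ) (f : X → ℝ≥0∞) (L : ℝ≥0∞) :
    {x | L < maximalFn μ f x} ⊆ ⋃ p ∈ {p : X × ℝ | 0 < p.2 ∧ p.2 ≤ 2 * R ∧
      L * μ (ball p.1 p.2) < ∫⁻ y in ball p.1 p.2, f y ∂μ}, ball p.1 p.2 := by
  intro x hx
  simp only [mem_ofPred_eq, maximalFn, lt_iSup_iff] at hx
  obtain ⟨z, r, hr, hxz, hlt⟩ := hx
  have hball : ball z (min r (2 * R)) = ball z r := by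
    rcases min_cases r (2 * R) with ⟨hmin, -⟩ | ⟨hmin, hlt⟩
    · rw [hmin]
    · rw [hmin, ball_eq_univ_of_two_mul_le hXR z le_rfl, ball_eq_univ_of_two_mul_le hXR z hlt.le]
  refine mem_biUnion (x := (z, min r (2 * R))) ⟨lt_min hr (by positivity), min_le_right _ _, ?_⟩
    (hball ▸ hxz)
  rw [hball]
  exact (ENNReal.lt_div_iff_mul_lt (Or.inl (hpos z r hr).ne') (Or.inl (measure_ne_top μ _))).mp hlt

end MaximalFunction

section MaximalInequalities

variable {X : Type*} [MetricSpace X] [MeasurableSpace X] [OpensMeasurableSpace X]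
  {μ : Measure X} [IsFiniteMeasure μ] {C : ℝ}

/-- Vitali covering: the chosen disjoint balls, enlarged `8` times, cover the superlevel set. -/
theorem IsDoublingWith.meas_lt_maximalFn_le (h : IsDoublingWith μ C)
    (hpos : ∀ (x : X) (r : ℝ), 0 < r → 0 < μ (ball x r)) (f : X → ℝ≥0∞) {L : ℝ≥0∞}
    (hL0 : L ≠ 0) (hLt : L ≠ ⊤) :
    μ {x | L < maximalFn μ f x} ≤ ENNReal.ofReal C ^ 3 * L⁻¹ * ∫⁻ y, f y ∂μ := by
  rcases isEmpty_or_nonempty X with hX | ⟨⟨x₀⟩⟩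
  · simp [eq_empty_of_isEmpty]
  obtain ⟨R, hR, hXR⟩ := h.exists_ball_eq_univ hpos (measure_ne_top μ _) x₀
  set t : Set (X × ℝ) :=
    {p | 0 < p.2 ∧ p.2 ≤ 2 * R ∧ L * μ (ball p.1 p.2) < ∫⁻ y in ball p.1 p.2, f y ∂μ}
  obtain ⟨u, hut, hdisj, hcov⟩ :=
    Vitali.exists_disjoint_subfamily_covering_enlargement (fun p : X × ℝ => ball p.1 p.2) t
      (fun p => p.2) 2 one_lt_two (fun p hp => hp.1.le) (2 * R) (fun p hp => hp.2.1)
      (fun p hp => nonempty_ball.mpr hp.1)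
  have hdisj' : Pairwise fun i j : u => Disjoint (ball i.1.1 i.1.2) (ball j.1.1 j.1.2) :=
    fun i j hij => hdisj i.2 j.2 fun h => hij (Subtype.ext h)
  have hucount : u.Countable :=
    hdisj.countable_of_measure_pos (fun _ => measurableSet_ball) fun b hb => hpos _ _ (hut hb).1
  have hcover : {x | L < maximalFn μ f x} ⊆ ⋃ b ∈ u, ball b.1 (2 ^ 3 * b.2) := by
    intro x hx
    obtain ⟨p, hp, hxp⟩ := mem_iUnion₂.mp (subset_iUnion_ball_of_lt_maximalFn hpos hR hXR f L hx)
    obtain ⟨b, hb, ⟨w, hwp, hwb⟩, hpb⟩ := hcov p hp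
    refine mem_iUnion₂.mpr ⟨b, hb, ?_⟩
    rw [mem_ball] at hxp hwp hwb ⊢
    linarith [dist_triangle4 x p.1 w b.1, dist_comm p.1 w, (hut hb).1]
  have := hucount.to_subtype
  calc μ {x | L < maximalFn μ f x} ≤ ∑' b : u, μ (ball b.1.1 (2 ^ 3 * b.1.2)) :=
        (measure_mono hcover).trans (measure_biUnion_le μ hucount _)
    _ ≤ ∑' b : u, ENNReal.ofReal C ^ 3 * L⁻¹ * ∫⁻ y in ball b.1.1 b.1.2, f y ∂μ := by
        refine ENNReal.tsum_le_tsum fun b => ?_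
        rw [mul_assoc]
        refine (h.measure_ball_two_pow_mul_le _ (hut b.2).1 3).trans ?_
        gcongr
        exact (ENNReal.mul_le_iff_le_inv hL0 hLt).mp (hut b.2).2.2.le
    _ = ENNReal.ofReal C ^ 3 * L⁻¹ * ∫⁻ y in ⋃ b : u, ball b.1.1 b.1.2, f y ∂μ := by
        rw [ENNReal.tsum_mul_left, lintegral_iUnion (fun _ => measurableSet_ball) hdisj']
    _ ≤ ENNReal.ofReal C ^ 3 * L⁻¹ * ∫⁻ y, f y ∂μ := by
        gcongr
        exact Measure.restrict_le_self

lemma IsDoublingWith.ae_maximalFn_lt_top (h : IsDoublingWith μ C)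
    (hpos : ∀ (x : X) (r : ℝ), 0 < r → 0 < μ (ball x r)) {f : X → ℝ≥0∞}
    (hf : ∫⁻ y, f y ∂μ ≠ ⊤) : ∀ᵐ x ∂μ, maximalFn μ f x < ⊤ := by
  refine ae_iff.mpr (le_antisymm ?_ zero_le)
  have hlim : Tendsto (fun n : ℕ => ENNReal.ofReal C ^ 3 * (n : ℝ≥0∞)⁻¹ * ∫⁻ y, f y ∂μ) atTop
      (𝓝 0) := by
    simpa using ENNReal.Tendsto.mul_const (ENNReal.Tendsto.const_mul
      ENNReal.tendsto_inv_nat_nhds_zero (Or.inr (by simp))) (Or.inr hf)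
  refine ge_of_tendsto hlim ((eventually_ne_atTop 0).mono fun n hn => ?_)
  refine (measure_mono fun x hx => ?_).trans (h.meas_lt_maximalFn_le hpos f (by simpa) (by simp))
  simp only [mem_ofPred_eq, not_lt, top_le_iff] at hx ⊢
  simp [hx]

/-- Split `f ≤ f 𝟙_{f > L} + L` and apply the weak type bound to the first part. -/
lemma IsDoublingWith.meas_two_mul_lt_maximalFn_le (h : IsDoublingWith μ C)
    (hpos : ∀ (x : X) (r : ℝ), 0 < r → 0 < μ (ball x r)) {f : X → ℝ≥0∞} (hf : Measurable f)
    {L : ℝ≥0∞} (hL0 : L ≠ 0) (hLt : L ≠ ⊤) :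
    μ {x | 2 * L < maximalFn μ f x} ≤
      ENNReal.ofReal C ^ 3 * L⁻¹ * ∫⁻ y in {y | L < f y}, f y ∂μ := by
  have hS : MeasurableSet {y | L < f y} := measurableSet_lt measurable_const hf
  have hsplit : ∀ y, f y ≤ {y | L < f y}.indicator f y + L := by
    intro y
    by_cases hy : L < f y
    · simp [hy]
    · simpa [hy] using not_lt.mp hy
  calc μ {x | 2 * L < maximalFn μ f x}
      ≤ μ {x | L < maximalFn μ ({y | L < f y}.indicator f) x} := by
        refine measure_mono fun x hx => ?_
        simp only [mem_ofPred_eq] at hx ⊢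
        by_contra! hle
        have := (maximalFn_le_add hpos hsplit x).trans (add_le_add_left hle L)
        rw [← two_mul] at this
        exact this.not_gt hx
    _ ≤ ENNReal.ofReal C ^ 3 * L⁻¹ * ∫⁻ y in {y | L < f y}, f y ∂μ := by
        rw [← lintegral_indicator hS]
        exact h.meas_lt_maximalFn_le hpos _ hL0 hLt

lemma IsDoublingWith.meas_lt_toReal_maximalFn_le (h : IsDoublingWith μ C)
    (hpos : ∀ (x : X) (r : ℝ), 0 < r → 0 < μ (ball x r)) {α : X → ℝ} (hα : Measurable α)
    {t : ℝ} (ht : 0 < t) :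
    μ {x | t < (maximalFn μ (fun y => ENNReal.ofReal |α y|) x).toReal} ≤
      ENNReal.ofReal C ^ 3 * 2 * (ENNReal.ofReal t)⁻¹ *
        μ.withDensity (fun y => ENNReal.ofReal |α y|) {y | t < 2 * |α y|} := by
  have hf : Measurable fun y => ENNReal.ofReal |α y| := hα.abs.ennreal_ofReal
  have hlevel : {x | t < (maximalFn μ (fun y => ENNReal.ofReal |α y|) x).toReal} ⊆
      {x | 2 * ENNReal.ofReal (t / 2) < maximalFn μ (fun y => ENNReal.ofReal |α y|) x} := by
    intro x hx
    simp only [mem_ofPred_eq] at hx ⊢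
    rw [← ENNReal.ofReal_ofNat 2, ← ENNReal.ofReal_mul zero_le_two, mul_div_cancel₀ t two_ne_zero]
    exact (ENNReal.ofReal_lt_ofReal_iff_of_nonneg ht.le).mpr hx |>.trans_le ENNReal.ofReal_toReal_le
  have hset : {y | ENNReal.ofReal (t / 2) < ENNReal.ofReal |α y|} = {y | t < 2 * |α y|} := by
    ext y
    rw [mem_ofPred_eq, mem_ofPred_eq, ENNReal.ofReal_lt_ofReal_iff_of_nonneg (by positivity)]
    constructor <;> intro <;> linarith
  have hinv : (ENNReal.ofReal (t / 2))⁻¹ = 2 * (ENNReal.ofReal t)⁻¹ := by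
    rw [← ENNReal.ofReal_inv_of_pos (by positivity), ← ENNReal.ofReal_inv_of_pos ht,
      ← ENNReal.ofReal_ofNat 2, ← ENNReal.ofReal_mul zero_le_two, inv_div, div_eq_mul_inv]
  calc _ ≤ ENNReal.ofReal C ^ 3 * (ENNReal.ofReal (t / 2))⁻¹ *
          ∫⁻ y in {y | ENNReal.ofReal (t / 2) < ENNReal.ofReal |α y|}, ENNReal.ofReal |α y| ∂μ :=
        (measure_mono hlevel).trans (h.meas_two_mul_lt_maximalFn_le hpos hf (by simpa using ht)
          ENNReal.ofReal_ne_top)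
    _ = _ := by
        rw [← withDensity_apply _ (measurableSet_lt measurable_const hf), hset, hinv]
        ring

/-- Layer cake twice: the distributional bound turns the layer-cake integral of `M |α|` into the
layer-cake integral of `2 |α|` with respect to the measure `|α| μ`, which avoids Fubini. -/
theorem IsDoublingWith.lintegral_maximalFn_rpow_le (h : IsDoublingWith μ C)
    (hpos : ∀ (x : X) (r : ℝ), 0 < r → 0 < μ (ball x r)) {α : X → ℝ} (hα : Measurable α)
    (hint : ∫⁻ y, ENNReal.ofReal |α y| ∂μ ≠ ⊤) {s : ℝ} (hs : 1 < s) :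
    ∫⁻ x, maximalFn μ (fun y => ENNReal.ofReal |α y|) x ^ s ∂μ ≤
      ENNReal.ofReal C ^ 3 * 2 ^ s * ENNReal.ofReal (s / (s - 1)) *
        ∫⁻ y, ENNReal.ofReal |α y| ^ s ∂μ := by
  set M := maximalFn μ fun y => ENNReal.ofReal |α y|
  set ν := μ.withDensity fun y => ENNReal.ofReal |α y|
  have hs0 : 0 < s := by linarith
  have hs1 : 0 < s - 1 := by linarith
  have hM : ∫⁻ x, M x ^ s ∂μ = ∫⁻ x, ENNReal.ofReal ((M x).toReal ^ s) ∂μ := by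
    refine lintegral_congr_ae ((h.ae_maximalFn_lt_top hpos hint).mono fun x hx => ?_)
    dsimp only
    rw [← ENNReal.ofReal_rpow_of_nonneg ENNReal.toReal_nonneg hs0.le, ENNReal.ofReal_toReal hx.ne]
  have hdist : ∀ t ∈ Ioi (0 : ℝ), μ {x | t < (M x).toReal} * ENNReal.ofReal (t ^ (s - 1)) ≤
      ENNReal.ofReal C ^ 3 * 2 * (ν {y | t < 2 * |α y|} * ENNReal.ofReal (t ^ (s - 1 - 1))) := by
    intro t (ht : 0 < t)
    calc _ ≤ ENNReal.ofReal C ^ 3 * 2 * (ENNReal.ofReal t)⁻¹ * ν {y | t < 2 * |α y|} *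
          ENNReal.ofReal (t ^ (s - 1)) := by
          gcongr
          exact h.meas_lt_toReal_maximalFn_le hpos hα ht
      _ = _ := by
          rw [Real.rpow_sub_one ht.ne' (s - 1), ENNReal.ofReal_div_of_pos ht, div_eq_mul_inv]
          ring
  have h2 : (2 : ℝ≥0∞) ^ s = 2 * ENNReal.ofReal 2 ^ (s - 1) := by
    conv_lhs => rw [show s = 1 + (s - 1) by ring]
    rw [ENNReal.rpow_add _ _ two_ne_zero ENNReal.ofNat_ne_top, ENNReal.rpow_one,
      ENNReal.ofReal_ofNat]
  calc ∫⁻ x, M x ^ s ∂μ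
      = ENNReal.ofReal s *
          ∫⁻ t in Ioi 0, μ {x | t < (M x).toReal} * ENNReal.ofReal (t ^ (s - 1)) := by
        rw [hM, lintegral_rpow_eq_lintegral_meas_lt_mul μ
          (Eventually.of_forall fun _ => ENNReal.toReal_nonneg)
          (measurable_maximalFn _).ennreal_toReal.aemeasurable hs0]
    _ ≤ ENNReal.ofReal s * (ENNReal.ofReal C ^ 3 * 2 *
          ∫⁻ t in Ioi 0, ν {y | t < 2 * |α y|} * ENNReal.ofReal (t ^ (s - 1 - 1))) := by
        gcongr ENNReal.ofReal s * ?_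
        rw [← lintegral_const_mul' _ _ (by finiteness)]
        exact setLIntegral_mono' measurableSet_Ioi hdist
    _ = ENNReal.ofReal s * (ENNReal.ofReal C ^ 3 * 2 * ((ENNReal.ofReal (s - 1))⁻¹ *
          ∫⁻ y, ENNReal.ofReal ((2 * |α y|) ^ (s - 1)) ∂ν)) := by
        rw [lintegral_rpow_eq_lintegral_meas_lt_mul ν (f := fun y => 2 * |α y|)
          (Eventually.of_forall fun _ => by positivity) (by fun_prop) hs1,
          ENNReal.inv_mul_cancel_left (by simpa using hs1) ENNReal.ofReal_ne_top]
    _ = ENNReal.ofReal C ^ 3 * 2 ^ s * ENNReal.ofReal (s / (s - 1)) *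
          ∫⁻ y, ENNReal.ofReal |α y| ^ s ∂μ := by
        rw [lintegral_rpow_withDensity_ofReal_abs hα zero_le_two hs, ENNReal.ofReal_div_of_pos hs1,
          h2, div_eq_mul_inv]
        ring

theorem IsDoublingWith.exists_eLpNorm_maximalFn_le (h : IsDoublingWith μ C)
    (hpos : ∀ (x : X) (r : ℝ), 0 < r → 0 < μ (ball x r)) {q : ℝ≥0∞} (hq : 1 < q) :
    ∃ K : ℝ≥0, ∀ α : X → ℝ, MemLp α q μ →
      eLpNorm (maximalFn μ fun y => ENNReal.ofReal |α y|) q μ ≤ K * eLpNorm α q μ := by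
  rcases eq_or_ne q ⊤ with rfl | hqt
  · refine ⟨1, fun α _ => ?_⟩
    rw [ENNReal.coe_one, one_mul, eLpNorm_exponent_top, eLpNorm_exponent_top]
    refine eLpNormEssSup_le_of_ae_enorm_bound (Eventually.of_forall fun x => ?_)
    refine maximalFn_le_of_ae_le ((ae_le_eLpNormEssSup (f := α)).mono fun y hy => ?_) x
    rwa [Real.enorm_eq_ofReal_abs] at hy
  set s := q.toReal
  have hs : 1 < s := by simpa using ENNReal.toReal_strict_mono hqt hq
  set K := ENNReal.ofReal C ^ 3 * 2 ^ s * ENNReal.ofReal (s / (s - 1))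
  refine ⟨(K ^ (1 / s)).toNNReal, fun α hα => ?_⟩
  obtain ⟨β, hβ, hαβ⟩ := hα.1
  have hβ₁ : MemLp β 1 μ := (hα.ae_eq hαβ).mono_exponent hq.le
  have hint : ∫⁻ y, ENNReal.ofReal |β y| ∂μ ≠ ⊤ := by
    simpa [eLpNorm_one_eq_lintegral_enorm, Real.enorm_eq_ofReal_abs] using hβ₁.2.ne
  have hq0 : q ≠ 0 := (zero_lt_one.trans hq).ne'
  rw [ENNReal.coe_toNNReal (by finiteness), eLpNorm_congr_ae hαβ,
    maximalFn_congr_ae (hαβ.mono fun y hy => by rw [hy]),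
    eLpNorm_eq_lintegral_rpow_enorm_toReal hq0 hqt, eLpNorm_eq_lintegral_rpow_enorm_toReal hq0 hqt,
    ← ENNReal.mul_rpow_of_nonneg _ _ (by positivity : (0 : ℝ) ≤ 1 / s)]
  simp only [enorm_eq_self, Real.enorm_eq_ofReal_abs]
  gcongr
  exact h.lintegral_maximalFn_rpow_le hpos hβ.measurable hint hs

end MaximalInequalities

section Holder

variable {Ω : Type*} [MeasurableSpace Ω] {μ : Measure Ω}

theorem lintegral_rpow_mul_le_eLpNorm_rpow_mul_eLpNorm {f g : Ω → ℝ≥0∞} (hf : AEMeasurable f μ)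
    (hg : AEMeasurable g μ) {p : ℝ} (hp : 0 < p) {q r : ℝ≥0∞} (hpq : ENNReal.ofReal p < q)
    (hr : 1 / r + ENNReal.ofReal p / q = 1) :
    ∫⁻ x, f x ^ p * g x ∂μ ≤ eLpNorm f q μ ^ p * eLpNorm g r μ := by
  rcases eq_or_ne q ⊤ with rfl | hqt
  · obtain rfl : r = 1 := by simpa using hr
    rw [eLpNorm_exponent_top, eLpNorm_one_eq_lintegral_enorm]
    simp only [enorm_eq_self]
    rw [← lintegral_const_mul'' _ hg]
    refine lintegral_mono_ae ((ae_le_eLpNormEssSup (f := f)).mono fun x hx => ?_)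
    gcongr
    exact hx
  have hq0 : q ≠ 0 := by rintro rfl; simp at hpq
  set s := q.toReal
  have hps : p < s := by
    simpa [ENNReal.toReal_ofReal hp.le] using ENNReal.toReal_strict_mono hqt hpq
  have hr₁ : 1 / r ≠ ⊤ := ne_top_of_le_ne_top ENNReal.one_ne_top (le_self_add.trans_eq hr)
  have hrt : r ≠ ⊤ := by
    rintro rfl
    rw [one_div, ENNReal.inv_top, zero_add, ENNReal.div_eq_one_iff hq0 hqt] at hr
    exact hpq.ne hr
  have hr0 : r ≠ 0 := by simpa using hr₁
  have hconj : (s / p).HolderConjugate r.toReal := by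
    have hsum := congrArg ENNReal.toReal hr
    rw [ENNReal.toReal_add hr₁ (by finiteness), ENNReal.toReal_div, ENNReal.toReal_div,
      ENNReal.toReal_ofReal hp.le] at hsum
    refine Real.holderConjugate_iff.mpr ⟨(one_lt_div hp).mpr hps, ?_⟩
    simp only [ENNReal.toReal_one, one_div] at hsum
    rw [inv_div]
    change p / q.toReal + _ = 1
    linarith
  calc ∫⁻ x, f x ^ p * g x ∂μ
      ≤ (∫⁻ x, (f x ^ p) ^ (s / p) ∂μ) ^ (1 / (s / p)) *
          (∫⁻ x, g x ^ r.toReal ∂μ) ^ (1 / r.toReal) :=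
        ENNReal.lintegral_mul_le_Lp_mul_Lq μ hconj (hf.pow_const p) hg
    _ = eLpNorm f q μ ^ p * eLpNorm g r μ := by
        rw [eLpNorm_eq_lintegral_rpow_enorm_toReal hq0 hqt,
          eLpNorm_eq_lintegral_rpow_enorm_toReal hr0 hrt, ← ENNReal.rpow_mul]
        simp_rw [enorm_eq_self, ← ENNReal.rpow_mul, mul_div_cancel₀ s hp.ne']
        congr 2
        simp only [s]
        field_simp

/-- The powers of `μ univ` cancel because `1 / r + p / q = 1`. -/
theorem lintegral_rpow_mul_le_of_reverseHolder [IsFiniteMeasure μ] {f : Ω → ℝ≥0∞} {w : Ω → ℝ}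
    (hf : AEMeasurable f μ) (hw : AEMeasurable w μ) (hw0 : ∀ x, 0 ≤ w x) {p : ℝ} (hp : 0 < p)
    {q r : ℝ≥0∞} (hpq : ENNReal.ofReal p < q) (hr : 1 / r + ENNReal.ofReal p / q = 1)
    {A B : ℝ≥0∞} (hfB : eLpNorm f q μ ≤ B * μ univ ^ (1 / q).toReal)
    (hwA : eLpNorm w r μ * μ univ ≤ A * μ univ ^ (1 / r).toReal * ∫⁻ x, ENNReal.ofReal (w x) ∂μ) :
    ∫⁻ x, f x ^ p * ENNReal.ofReal (w x) ∂μ ≤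
      B ^ p * A * ∫⁻ x, ENNReal.ofReal (w x) ∂μ := by
  rcases eq_or_ne μ 0 with rfl | hμ
  · simp
  set m := μ univ
  have hm0 : m ≠ 0 := Measure.measure_univ_ne_zero.mpr hμ
  have hmt : m ≠ ⊤ := measure_ne_top μ univ
  have hexp : (1 / q).toReal * p + (1 / r).toReal = 1 := by
    have h₁ : 1 / r ≠ ⊤ := ne_top_of_le_ne_top ENNReal.one_ne_top (le_self_add.trans_eq hr)
    have h₂ : ENNReal.ofReal p / q ≠ ⊤ := ne_top_of_le_ne_top ENNReal.one_ne_top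
      (le_add_self.trans_eq hr)
    have hsum := congrArg ENNReal.toReal hr
    rw [ENNReal.toReal_add h₁ h₂, ENNReal.toReal_div (ENNReal.ofReal p),
      ENNReal.toReal_ofReal hp.le, ENNReal.toReal_one] at hsum
    rw [ENNReal.toReal_div 1 q, ENNReal.toReal_one]
    linarith [show 1 / q.toReal * p = p / q.toReal by ring]
  have hw' : eLpNorm (fun x => ENNReal.ofReal (w x)) r μ = eLpNorm w r μ :=
    eLpNorm_congr_enorm_ae (Eventually.of_forall fun x => by
      rw [enorm_eq_self, Real.enorm_eq_ofReal (hw0 x)])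
  have hwA' : eLpNorm w r μ ≤ A * m ^ (1 / r).toReal * (∫⁻ x, ENNReal.ofReal (w x) ∂μ) * m⁻¹ :=
    (ENNReal.le_div_iff_mul_le (Or.inl hm0) (Or.inl hmt)).mpr hwA
  calc ∫⁻ x, f x ^ p * ENNReal.ofReal (w x) ∂μ
      ≤ eLpNorm f q μ ^ p * eLpNorm w r μ :=
        hw' ▸ lintegral_rpow_mul_le_eLpNorm_rpow_mul_eLpNorm hf hw.ennreal_ofReal hp hpq hr
    _ ≤ (B * m ^ (1 / q).toReal) ^ p *
          (A * m ^ (1 / r).toReal * (∫⁻ x, ENNReal.ofReal (w x) ∂μ) * m⁻¹) := by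
        gcongr
    _ = B ^ p * A * (∫⁻ x, ENNReal.ofReal (w x) ∂μ) *
          (m ^ ((1 / q).toReal * p + (1 / r).toReal) * m⁻¹) := by
        rw [ENNReal.mul_rpow_of_nonneg _ _ hp.le, ← ENNReal.rpow_mul,
          ENNReal.rpow_add _ _ hm0 hmt]
        ring
    _ = B ^ p * A * ∫⁻ x, ENNReal.ofReal (w x) ∂μ := by
        rw [hexp, ENNReal.rpow_one, ENNReal.mul_inv_cancel hm0 hmt, mul_one]

theorem lintegral_ofReal_div_rpow_mul_le_of_reverseHolder [IsFiniteMeasure μ] {f : Ω → ℝ≥0∞}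
    {v w : Ω → ℝ} (hf : AEMeasurable f μ) (hw : AEMeasurable w μ) (hw0 : ∀ x, 0 ≤ w x)
    {c a : ℝ} (ha : 0 < a) (hv : ∀ x, ENNReal.ofReal |v x| ≤ ENNReal.ofReal c * f x)
    {p : ℝ} (hp : 0 < p) {q r : ℝ≥0∞} (hpq : ENNReal.ofReal p < q)
    (hr : 1 / r + ENNReal.ofReal p / q = 1) {A K : ℝ≥0∞}
    (hfK : eLpNorm f q μ ≤ K * ENNReal.ofReal a * μ univ ^ (1 / q).toReal)
    (hwA : eLpNorm w r μ * μ univ ≤ A * μ univ ^ (1 / r).toReal * ∫⁻ x, ENNReal.ofReal (w x) ∂μ) :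
    ∫⁻ x, ENNReal.ofReal (|v x| / a) ^ p * ENNReal.ofReal (w x) ∂μ ≤
      (ENNReal.ofReal c * K) ^ p * A * ∫⁻ x, ENNReal.ofReal (w x) ∂μ := by
  have ha0 : ENNReal.ofReal a ≠ 0 := by simpa using ha
  calc ∫⁻ x, ENNReal.ofReal (|v x| / a) ^ p * ENNReal.ofReal (w x) ∂μ
      ≤ ∫⁻ x, (ENNReal.ofReal c / ENNReal.ofReal a) ^ p * (f x ^ p * ENNReal.ofReal (w x)) ∂μ := by
        refine lintegral_mono fun x => ?_
        rw [← mul_assoc, ← ENNReal.mul_rpow_of_nonneg _ _ hp.le, ENNReal.ofReal_div_of_pos ha,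
          div_eq_mul_inv, div_eq_mul_inv, mul_right_comm]
        gcongr
        exact hv x
    _ ≤ (ENNReal.ofReal c / ENNReal.ofReal a) ^ p *
          ((K * ENNReal.ofReal a) ^ p * A * ∫⁻ x, ENNReal.ofReal (w x) ∂μ) := by
        rw [lintegral_const_mul' _ _ (by finiteness)]
        gcongr
        exact lintegral_rpow_mul_le_of_reverseHolder hf hw hw0 hp hpq hr hfK hwA
    _ = (ENNReal.ofReal c * K) ^ p * A * ∫⁻ x, ENNReal.ofReal (w x) ∂μ := by
        rw [← mul_assoc, ← mul_assoc, ← ENNReal.mul_rpow_of_nonneg _ _ hp.le, div_eq_mul_inv,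
          mul_mul_mul_comm, mul_comm (ENNReal.ofReal a)⁻¹, ENNReal.mul_inv_cancel ha0 (by simp),
          mul_one]

end Holder

lemma MonotoneOn.apply_mul_le_of_upperType {ψ : ℝ → ℝ} (hmono : MonotoneOn ψ (Ici 0)) {p Cu : ℝ}
    (hup : ∀ s t, 1 ≤ s → 0 ≤ t → ψ (s * t) ≤ Cu * s ^ p * ψ t) {s t : ℝ} (hs : 0 ≤ s)
    (ht : 0 ≤ t) (hψt : 0 ≤ ψ t) : ψ (s * t) ≤ max Cu 1 * (s ^ p + 1) * ψ t := by
  have hsp : 0 ≤ s ^ p := Real.rpow_nonneg hs p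
  rcases le_or_gt 1 s with hs1 | hs1
  · refine (hup s t hs1 ht).trans (mul_le_mul_of_nonneg_right ?_ hψt)
    nlinarith [le_max_left Cu 1, le_max_right Cu 1]
  · calc ψ (s * t) ≤ ψ t :=
          hmono (mul_nonneg hs ht) ht (mul_le_of_le_one_left ht hs1.le)
      _ ≤ max Cu 1 * (s ^ p + 1) * ψ t := by
          refine le_mul_of_one_le_left hψt ?_
          nlinarith [le_max_right Cu 1]

lemma lintegral_ofReal_apply_mul_le_of_upperType {X : Type*} [MeasurableSpace X] {μ : Measure X}
    {φ : X → ℝ → ℝ} (hnn : ∀ x t, 0 ≤ t → 0 ≤ φ x t) (hmono : ∀ x, MonotoneOn (φ x) (Ici 0))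
    {p Cu : ℝ} (hp : 0 ≤ p)
    (hup : ∀ (x : X) (s t : ℝ), 1 ≤ s → 0 ≤ t → φ x (s * t) ≤ Cu * s ^ p * φ x t)
    {t : ℝ} (ht : 0 ≤ t) (hmeas : Measurable fun x => φ x t) {u : X → ℝ} (hu : ∀ x, 0 ≤ u x)
    {B : ℝ≥0∞} (hB : ∫⁻ x, ENNReal.ofReal (u x) ^ p * ENNReal.ofReal (φ x t) ∂μ ≤
      B * ∫⁻ x, ENNReal.ofReal (φ x t) ∂μ) :
    ∫⁻ x, ENNReal.ofReal (φ x (u x * t)) ∂μ ≤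
      ENNReal.ofReal (max Cu 1) * (B + 1) * ∫⁻ x, ENNReal.ofReal (φ x t) ∂μ := by
  have hpt : ∀ x, ENNReal.ofReal (φ x (u x * t)) ≤ ENNReal.ofReal (max Cu 1) *
      (ENNReal.ofReal (u x) ^ p * ENNReal.ofReal (φ x t) + ENNReal.ofReal (φ x t)) := fun x => by
    have hsp := Real.rpow_nonneg (hu x) p
    calc ENNReal.ofReal (φ x (u x * t))
        ≤ ENNReal.ofReal (max Cu 1 * (u x ^ p + 1) * φ x t) := ENNReal.ofReal_le_ofReal
          ((hmono x).apply_mul_le_of_upperType (hup x) (hu x) ht (hnn x t ht))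
      _ = _ := by
          rw [ENNReal.ofReal_mul (by positivity), ENNReal.ofReal_mul (by positivity),
            ENNReal.ofReal_add hsp zero_le_one, ENNReal.ofReal_one,
            ← ENNReal.ofReal_rpow_of_nonneg (hu x) hp]
          ring
  calc ∫⁻ x, ENNReal.ofReal (φ x (u x * t)) ∂μ
      ≤ ENNReal.ofReal (max Cu 1) * (∫⁻ x, ENNReal.ofReal (u x) ^ p * ENNReal.ofReal (φ x t) ∂μ +
          ∫⁻ x, ENNReal.ofReal (φ x t) ∂μ) := by
        rw [← lintegral_add_right _ hmeas.ennreal_ofReal,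
          ← lintegral_const_mul' _ _ ENNReal.ofReal_ne_top]
        exact lintegral_mono hpt
    _ ≤ ENNReal.ofReal (max Cu 1) * (B + 1) * ∫⁻ x, ENNReal.ofReal (φ x t) ∂μ := by
        rw [mul_assoc, add_mul, one_mul]
        gcongr

/-- If `‖1‖_{L^φ} = 0` then `∫ φ(x, n) dμ ≤ 1` for every `n`, while `φ(x, n) → ∞`:
Fatou's lemma then forces `μ = 0`. -/
lemma luxNorm_const_one_ne_zero {X : Type*} [MeasurableSpace X] {μ : Measure X} (hμ : μ ≠ 0)
    {φ : X → ℝ → ℝ} (hmono : ∀ x, MonotoneOn (φ x) (Ici 0))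
    (hlim : ∀ x, Tendsto (φ x) atTop atTop) (hmeas : ∀ t : ℝ, Measurable fun x => φ x t) :
    luxNorm μ φ (fun _ => 1) ≠ 0 := by
  intro hN
  have hbound : ∀ n : ℕ, ∫⁻ x, ENNReal.ofReal (φ x n) ∂μ ≤ 1 := by
    intro n
    have hn : (0 : ℝ) < 1 / (n + 1) := by positivity
    have hlt : luxNorm μ φ (fun _ => 1) < ENNReal.ofReal (1 / (n + 1)) := by
      rw [hN]; exact ENNReal.ofReal_pos.mpr hn
    simp only [luxNorm, iInf_lt_iff] at hlt
    obtain ⟨l, hl, hint, hll⟩ := hlt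
    have hnl : (n : ℝ) ≤ |1| / l := by
      rw [abs_one, le_div_iff₀ hl]
      have := (ENNReal.ofReal_lt_ofReal_iff hn).mp hll
      rw [lt_div_iff₀ (by positivity)] at this
      nlinarith
    refine le_trans (lintegral_mono fun x => ?_) hint
    exact ENNReal.ofReal_le_ofReal (hmono x (mem_Ici.mpr (Nat.cast_nonneg n))
      (mem_Ici.mpr (by positivity)) hnl)
  have htop : ∀ x, atTop.liminf (fun n : ℕ => ENNReal.ofReal (φ x n)) = ⊤ := fun x =>
    (ENNReal.tendsto_ofReal_atTop.comp ((hlim x).comp tendsto_natCast_atTop_atTop)).liminf_eq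
  have hfatou := lintegral_liminf_le (μ := μ) (u := atTop)
    (f := fun (n : ℕ) x => ENNReal.ofReal (φ x n)) fun n => (hmeas n).ennreal_ofReal
  simp only [htop, lintegral_const, ENNReal.top_mul (Measure.measure_univ_ne_zero.mpr hμ)] at hfatou
  exact ENNReal.one_ne_top (top_le_iff.mp (hfatou.trans
    ((liminf_le_of_frequently_le' (Frequently.of_forall hbound)))))

theorem single_atom_estimate_general
    {X : Type*} [MetricSpace X] [MeasurableSpace X] [BorelSpace X]
    (μ : Measure X) (C₁ : ℝ)
    (hdouble : ∀ (x : X) (r : ℝ), 0 < r →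
      μ (ball x (2 * r)) ≤ ENNReal.ofReal C₁ * μ (ball x r))
    (hpos : ∀ (x : X) (r : ℝ), 0 < r → 0 < μ (ball x r))
    (hXfin : μ Set.univ < ⊤)
    (φ : X → ℝ → ℝ)
    (hnn : ∀ x t, 0 ≤ t → 0 ≤ φ x t)
    (hmono : ∀ x, MonotoneOn (φ x) (Set.Ici 0))
    (h0 : ∀ x, φ x 0 = 0)
    (hlim : ∀ x, Tendsto (φ x) atTop atTop)
    (hmeas : ∀ t : ℝ, Measurable fun x => φ x t)
    (p₁ : ℝ) (hp₁ : 0 < p₁) (hp₁1 : p₁ ≤ 1)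
    (Cu : ℝ)
    (hup : ∀ (x : X) (s t : ℝ), 1 ≤ s → 0 ≤ t → φ x (s * t) ≤ Cu * s ^ p₁ * φ x t)
    (q : ℝ≥0∞) (hq : 1 < q)
    (r : ℝ≥0∞) (hr : 1 / r + ENNReal.ofReal p₁ / q = 1)
    (ARH : ℝ)
    (hRH : ∀ t : ℝ, 0 < t → ∀ (x : X) (ρ : ℝ), 0 < ρ →
      eLpNorm (fun y => φ y t) r (μ.restrict (ball x ρ)) * μ (ball x ρ) ≤
        ENNReal.ofReal ARH * μ (ball x ρ) ^ (1 / r).toReal *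
          ∫⁻ y in ball x ρ, ENNReal.ofReal (φ y t) ∂μ)
    (α : X → ℝ) (hαm : AEStronglyMeasurable α μ)
    (hα : eLpNorm α q μ ≤
      μ Set.univ ^ (1 / q).toReal * (luxNorm μ φ fun _ => 1)⁻¹)
    (Tα : X → ℝ) (C₀ : ℝ)
    (hT : ∀ x, ENNReal.ofReal |Tα x| ≤
      ENNReal.ofReal C₀ * maximalFn μ (fun y => ENNReal.ofReal |α y|) x) :
    ∃ C : ℝ, 0 < C ∧ ∀ c : ℂ,
      ∫⁻ x, ENNReal.ofReal (φ x (‖c‖ * |Tα x|)) ∂μ ≤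
        ENNReal.ofReal C *
          ∫⁻ x, ENNReal.ofReal
            (φ x (‖c‖ * ((luxNorm μ φ fun _ => 1)⁻¹).toReal)) ∂μ := by
  have : IsFiniteMeasure μ := ⟨hXfin⟩
  rcases eq_or_ne μ 0 with rfl | hμ
  · exact ⟨1, one_pos, fun c => by simp⟩
  set N := luxNorm μ φ fun _ => 1
  set M := maximalFn μ fun y => ENNReal.ofReal |α y|
  have hN0 : N ≠ 0 := luxNorm_const_one_ne_zero hμ hmono hlim hmeas
  rcases eq_or_ne N ⊤ with hNt | hNt
  · have hα0 : α =ᵐ[μ] 0 := (eLpNorm_eq_zero_iff hαm (zero_lt_one.trans hq).ne').mp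
      (by simpa [hNt] using hα)
    have hM0 : ∀ x, M x = 0 := fun x =>
      nonpos_iff_eq_zero.mp (maximalFn_le_of_ae_le (hα0.mono fun y hy => by simp [hy]) x)
    have hT0 : ∀ x, Tα x = 0 := fun x => by simpa [hM0] using hT x
    exact ⟨1, one_pos, fun c => by simp [hT0, h0]⟩
  set a := (N⁻¹).toReal
  have ha : 0 < a := ENNReal.toReal_pos (by simpa using hNt) (by simpa using hN0)
  obtain ⟨K, hK⟩ := IsDoublingWith.exists_eLpNorm_maximalFn_le hdouble hpos hq
  have hMq : eLpNorm M q μ ≤ K * ENNReal.ofReal a * μ univ ^ (1 / q).toReal := by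
    refine (hK α ⟨hαm, hα.trans_lt (by finiteness)⟩).trans ?_
    rw [ENNReal.ofReal_toReal (by simpa using hN0), mul_assoc, mul_comm N⁻¹]
    gcongr
  obtain ⟨x₀, -⟩ := nonempty_of_measure_ne_zero (Measure.measure_univ_ne_zero.mpr hμ)
  obtain ⟨R, hR, hXR⟩ := IsDoublingWith.exists_ball_eq_univ hdouble hpos hXfin.ne x₀
  set B := (ENNReal.ofReal C₀ * K) ^ p₁ * ENNReal.ofReal ARH
  have hB : ENNReal.ofReal (max Cu 1) * (B + 1) ≠ ⊤ := by finiteness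
  refine ⟨(ENNReal.ofReal (max Cu 1) * (B + 1)).toReal, ENNReal.toReal_pos (by positivity) hB,
    fun c => ?_⟩
  rcases eq_or_ne c 0 with rfl | hc
  · simp [h0]
  have ht : 0 < ‖c‖ * a := by positivity
  have hmoment := lintegral_ofReal_div_rpow_mul_le_of_reverseHolder
    (measurable_maximalFn _).aemeasurable (hmeas _).aemeasurable (fun x => hnn x _ ht.le) ha hT hp₁
    ((ENNReal.ofReal_le_one.mpr hp₁1).trans_lt hq) hr hMq (by simpa [hXR] using hRH _ ht x₀ R hR)
  have hTα : ∀ x, ‖c‖ * |Tα x| = |Tα x| / a * (‖c‖ * a) := fun x => by field_simp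
  simp_rw [hTα, ENNReal.ofReal_toReal hB]
  exact lintegral_ofReal_apply_mul_le_of_upperType hnn hmono hp₁.le hup ht.le (hmeas _)
    (fun x => by positivity) hmoment

/-- Estimate for single atoms: if `‖α‖_{L^q} ≤ μ(X)^{1/q} ‖𝟙_X‖_{L^φ}^{-1}`
and `|Tα| ≤ C₀ M(α)`, then
`∫_X φ(x, |λ| |Tα(x)|) dμ ≤ C φ(X, |λ| ‖𝟙_X‖_{L^φ}^{-1})` for every `λ ∈ ℂ`. -/
theorem single_atom_estimate
    {X : Type*} [MetricSpace X] [MeasurableSpace X] [BorelSpace X]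
    (μ : Measure X) (C₁ : ℝ)
    (hdouble : ∀ (x : X) (r : ℝ), 0 < r →
      μ (ball x (2 * r)) ≤ ENNReal.ofReal C₁ * μ (ball x r))
    (hpos : ∀ (x : X) (r : ℝ), 0 < r → 0 < μ (ball x r))
    (hfin : ∀ (x : X) (r : ℝ), 0 < r → μ (ball x r) < ⊤)
    (hXfin : μ Set.univ < ⊤)
    (φ : X → ℝ → ℝ)
    (hnn : ∀ x t, 0 ≤ t → 0 ≤ φ x t)
    (hmono : ∀ x, MonotoneOn (φ x) (Set.Ici 0))
    (h0 : ∀ x, φ x 0 = 0)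
    (hposφ : ∀ x t, 0 < t → 0 < φ x t)
    (hlim : ∀ x, Tendsto (φ x) atTop atTop)
    (hmeas : ∀ t : ℝ, Measurable fun x => φ x t)
    (p₁ : ℝ) (hp₁ : 0 < p₁) (hp₁1 : p₁ ≤ 1)
    (Cu : ℝ) (hCu : 0 < Cu)
    (hup : ∀ (x : X) (s t : ℝ), 1 ≤ s → 0 ≤ t → φ x (s * t) ≤ Cu * s ^ p₁ * φ x t)
    (q : ℝ≥0∞) (hq : 1 < q)
    (r : ℝ≥0∞) (hr : 1 / r + ENNReal.ofReal p₁ / q = 1)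
    (ARH : ℝ) (hARH : 0 < ARH)
    (hRH : ∀ t : ℝ, 0 < t → ∀ (x : X) (ρ : ℝ), 0 < ρ →
      eLpNorm (fun y => φ y t) r (μ.restrict (ball x ρ)) * μ (ball x ρ) ≤
        ENNReal.ofReal ARH * μ (ball x ρ) ^ (1 / r).toReal *
          ∫⁻ y in ball x ρ, ENNReal.ofReal (φ y t) ∂μ)
    (α : X → ℝ) (hαm : AEStronglyMeasurable α μ)
    (hα : eLpNorm α q μ ≤
      μ Set.univ ^ (1 / q).toReal * (luxNorm μ φ fun _ => 1)⁻¹)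
    (Tα : X → ℝ) (C₀ : ℝ) (hC₀ : 0 < C₀)
    (hT : ∀ x, ENNReal.ofReal |Tα x| ≤
      ENNReal.ofReal C₀ * maximalFn μ (fun y => ENNReal.ofReal |α y|) x) :
    ∃ C : ℝ, 0 < C ∧ ∀ c : ℂ,
      ∫⁻ x, ENNReal.ofReal (φ x (‖c‖ * |Tα x|)) ∂μ ≤
        ENNReal.ofReal C *
          ∫⁻ x, ENNReal.ofReal
            (φ x (‖c‖ * ((luxNorm μ φ fun _ => 1)⁻¹).toReal)) ∂μ :=
  single_atom_estimate_general μ C₁ hdouble hpos hXfin φ hnn hmono h0 hlim hmeas p₁ hp₁ hp₁1 Cu hup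
    q hq r hr ARH hRH α hαm hα Tα C₀ hT
end

section
/- Let Ω ⊊ ℝⁿ be open with Ω^∁ unbounded, satisfying the geometric property that for every ball B₀ = B(x₀,r₀) centered in Ω with 4B₀ ∩ ∂Ω ≠ ∅ there exists a ball B̃₀ ⊂ Ω^∁ with radius comparable to r₀ and center at distance ≲ r₀ from x₀. Let φ be a growth function on ℝⁿ, a ∈ L^∞(ℝⁿ) supported in B₀ with ‖a‖_{L^∞} ≤ ‖𝟙_{B₀}‖_{L^φ(ℝⁿ)}^{-1}. Define ã := a − (∫_{B₀} a(x)dx) · 𝟙_{B̃₀}/|B̃₀|. Then ∫_{ℝⁿ} ã(x) dx = 0, supp(ã) ⊂ C̃ B₀ for a constant C̃ depending only on the comparability constants, ‖ã‖_{L^∞(ℝⁿ)} ≤ C ‖𝟙_{C̃B₀}‖_{L^φ(ℝⁿ)}^{-1}, and ã|_Ω = a|_Ω. -/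
open MeasureTheory Metric Filter
open scoped ENNReal

/-- The corrected atom `ã := a − (∫_{B₀} a) 𝟙_{B̃₀}/|B̃₀|`. -/
noncomputable def tildeAtom {n : ℕ}
    (a : EuclideanSpace ℝ (Fin n) → ℝ) (x₀ : EuclideanSpace ℝ (Fin n)) (r₀ : ℝ)
    (x₁ : EuclideanSpace ℝ (Fin n)) (r₁ : ℝ) : EuclideanSpace ℝ (Fin n) → ℝ :=
  fun x => a x -
    (∫ y in ball x₀ r₀, a y) * Set.indicator (ball x₁ r₁) (fun _ => (1 : ℝ)) x /
      (volume (ball x₁ r₁)).toReal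

/-!
`ã` has integral zero by construction and agrees with `a` off `B̃₀ ⊆ Ωᶜ`; both balls lie in
`3c B₀`. Pointwise `|ã| ≤ ‖a‖_∞ (1 + |B₀| / |B̃₀|)`, so the `L^∞` bound reduces to
`ε ‖𝟙_{3cB₀}‖_{L^φ} ≤ ‖𝟙_{B₀}‖_{L^φ}`. Hölder's inequality turns the uniform Muckenhoupt
condition on `3cB₀` into `∫_{3cB₀} φ(·, τ) ≤ K ∫_{B₀} φ(·, τ)` with `K` independent of `τ`, and
the lower type `p` of `φ` absorbs `K` once `τ` is scaled down by a small `ε`.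
-/

section Muckenhoupt

variable {X : Type*} [MeasurableSpace X] {μ : Measure X} {w : X → ℝ≥0∞} {q : ℝ}

theorem measure_univ_rpow_le_lintegral_mul_lintegral_rpow (hw : AEMeasurable w μ)
    (hw0 : ∀ x, w x ≠ 0) (hwtop : ∀ x, w x ≠ ⊤) (hq : 1 < q) :
    μ Set.univ ^ q ≤ (∫⁻ x, w x ∂μ) * (∫⁻ x, w x ^ (1 - q / (q - 1)) ∂μ) ^ (q - 1) := by
  have hq0 : q - 1 ≠ 0 := by linarith
  -- Hölder with exponents `q` and `q / (q - 1)` applied to `1 = w ^ (1/q) * w ^ (-1/q)`.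
  have hone : ∀ x, w x ^ (1 / q) * w x ^ (-(1 / q)) = 1 := fun x => by
    rw [← ENNReal.rpow_add _ _ (hw0 x) (hwtop x), add_neg_cancel, ENNReal.rpow_zero]
  have hH := ENNReal.lintegral_mul_le_Lp_mul_Lq μ (Real.HolderConjugate.conjExponent hq)
    (f := fun x => w x ^ (1 / q)) (g := fun x => w x ^ (-(1 / q))) (hw.pow_const _)
    (hw.pow_const _)
  have e₁ : 1 / q * q = 1 := one_div_mul_cancel (by linarith)
  have e₂ : -(1 / q) * (q / (q - 1)) = 1 - q / (q - 1) := by field_simp; ring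
  have e₃ : 1 / (q / (q - 1)) * q = q - 1 := by field_simp
  simp only [Pi.mul_apply, hone, lintegral_one, ← ENNReal.rpow_mul, Real.conjExponent, e₁, e₂,
    ENNReal.rpow_one] at hH
  calc μ Set.univ ^ q
      ≤ ((∫⁻ x, w x ∂μ) ^ (1 / q) *
          (∫⁻ x, w x ^ (1 - q / (q - 1)) ∂μ) ^ (1 / (q / (q - 1)))) ^ q := by gcongr
    _ = _ := by
      rw [ENNReal.mul_rpow_of_nonneg _ _ (by linarith), ← ENNReal.rpow_mul, ← ENNReal.rpow_mul,
        e₁, e₃, ENNReal.rpow_one]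

theorem setLIntegral_le_mul_setLIntegral_of_muckenhoupt {s t : Set X} (hst : s ⊆ t)
    (hs0 : μ s ≠ 0) (hstop : μ s ≠ ⊤) (hw : AEMeasurable w μ)
    (hw0 : ∀ x, w x ≠ 0) (hwtop : ∀ x, w x ≠ ⊤) (hq : 1 < q) {A : ℝ≥0∞}
    (hA : (∫⁻ x in t, w x ∂μ) * (∫⁻ x in t, w x ^ (1 - q / (q - 1)) ∂μ) ^ (q - 1) ≤
      A * μ t ^ q) :
    ∫⁻ x in t, w x ∂μ ≤ A * μ t ^ q / μ s ^ q * ∫⁻ x in s, w x ∂μ := by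
  have hs := measure_univ_rpow_le_lintegral_mul_lintegral_rpow hw.restrict hw0 hwtop hq
    (μ := μ.restrict s)
  rw [Measure.restrict_apply_univ] at hs
  have hmono : ∫⁻ x in s, w x ^ (1 - q / (q - 1)) ∂μ ≤ ∫⁻ x in t, w x ^ (1 - q / (q - 1)) ∂μ :=
    lintegral_mono_set hst
  rw [← ENNReal.mul_div_right_comm, ENNReal.le_div_iff_mul_le
    (Or.inl (ENNReal.rpow_pos (pos_iff_ne_zero.2 hs0) hstop).ne')
    (Or.inl (ENNReal.rpow_ne_top_of_nonneg (by linarith) hstop))]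
  calc (∫⁻ x in t, w x ∂μ) * μ s ^ q
      ≤ (∫⁻ x in t, w x ∂μ) *
          ((∫⁻ x in s, w x ∂μ) * (∫⁻ x in t, w x ^ (1 - q / (q - 1)) ∂μ) ^ (q - 1)) := by
        gcongr
        exact hs.trans (by gcongr)
    _ = (∫⁻ x in s, w x ∂μ) *
          ((∫⁻ x in t, w x ∂μ) * (∫⁻ x in t, w x ^ (1 - q / (q - 1)) ∂μ) ^ (q - 1)) := by ring
    _ ≤ (∫⁻ x in s, w x ∂μ) * (A * μ t ^ q) := by gcongr
    _ = A * μ t ^ q * ∫⁻ x in s, w x ∂μ := by ring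

end Muckenhoupt

theorem ENNReal.toReal_inv_le_inv_mul_toReal_inv {x y : ℝ≥0∞} {ε : ℝ} (hε : 0 < ε)
    (hyx : ENNReal.ofReal ε * y ≤ x) (hxy : x ≤ y) :
    x⁻¹.toReal ≤ ε⁻¹ * y⁻¹.toReal := by
  rcases eq_or_ne x 0 with rfl | hx0
  · simp; positivity
  rcases eq_or_ne x ⊤ with rfl | hxtop
  · simp; positivity
  have hytop : y ≠ ⊤ := by
    rintro rfl
    simp [ENNReal.mul_top (ENNReal.ofReal_pos.2 hε).ne', hxtop] at hyx
  have hy0 : y ≠ 0 := (pos_iff_ne_zero.2 hx0 |>.trans_le hxy).ne'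
  have hyx' : ε * y.toReal ≤ x.toReal := by
    simpa [ENNReal.toReal_mul, hε.le] using ENNReal.toReal_mono hxtop hyx
  rw [ENNReal.toReal_inv, ENNReal.toReal_inv, ← mul_inv]
  exact inv_anti₀ (by have := ENNReal.toReal_pos hy0 hytop; positivity) hyx'

section Luxemburg

open Topology

variable {X : Type*} [MeasurableSpace X] {μ : Measure X} {φ : X → ℝ → ℝ} {p Cl q A : ℝ}
  {s t : Set X} {K : ℝ≥0∞}

theorem ofReal_mul_luxNorm_le {f g : X → ℝ} {ε : ℝ} (hε : 0 < ε)
    (h : ∀ l > 0, ∫⁻ x, ENNReal.ofReal (φ x (|g x| / l)) ∂μ ≤ 1 →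
      ∫⁻ x, ENNReal.ofReal (φ x (|f x| / (l / ε))) ∂μ ≤ 1) :
    ENNReal.ofReal ε * luxNorm μ φ f ≤ luxNorm μ φ g := by
  refine le_iInf₂ fun l hl => le_iInf fun hg => ?_
  calc ENNReal.ofReal ε * luxNorm μ φ f ≤ ENNReal.ofReal ε * ENNReal.ofReal (l / ε) := by
        gcongr
        exact iInf₂_le_of_le (l / ε) (div_pos hl hε) (iInf_le _ (h l hl hg))
    _ = ENNReal.ofReal l := by rw [← ENNReal.ofReal_mul hε.le, mul_div_cancel₀ _ hε.ne']

theorem luxNorm_indicator_mono (h0 : ∀ x, φ x 0 = 0) {s t : Set X} (hst : s ⊆ t) :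
    luxNorm μ φ (s.indicator fun _ => 1) ≤ luxNorm μ φ (t.indicator fun _ => 1) := by
  have key := ofReal_mul_luxNorm_le (μ := μ) (φ := φ) (f := s.indicator fun _ => 1)
    (g := t.indicator fun _ => 1) one_pos fun l _ ht => le_trans (lintegral_mono fun x => ?_) ht
  · simpa using key
  · by_cases hx : x ∈ s
    · simp [hx, hst hx]
    · simp [hx, h0]

theorem lintegral_ofReal_indicator_div (h0 : ∀ x, φ x 0 = 0) {s : Set X} (hs : MeasurableSet s)
    (l : ℝ) :
    ∫⁻ x, ENNReal.ofReal (φ x (|s.indicator (fun _ => (1 : ℝ)) x| / l)) ∂μ =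
      ∫⁻ x in s, ENNReal.ofReal (φ x l⁻¹) ∂μ := by
  rw [← lintegral_indicator hs]
  congr 1 with x
  by_cases hx : x ∈ s <;> simp [hx, h0]

theorem exists_ofReal_mul_luxNorm_indicator_le (h0 : ∀ x, φ x 0 = 0) (hp : 0 < p)
    (hCl : 0 < Cl)
    (hlow : ∀ x (u τ : ℝ), 0 ≤ u → u ≤ 1 → 0 ≤ τ → φ x (u * τ) ≤ Cl * u ^ p * φ x τ)
    (hs : MeasurableSet s) (ht : MeasurableSet t) (hK : K ≠ ⊤)
    (hcmp : ∀ τ > 0, ∫⁻ x in t, ENNReal.ofReal (φ x τ) ∂μ ≤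
      K * ∫⁻ x in s, ENNReal.ofReal (φ x τ) ∂μ) :
    ∃ ε > 0, ENNReal.ofReal ε * luxNorm μ φ (t.indicator fun _ => 1) ≤
      luxNorm μ φ (s.indicator fun _ => 1) := by
  obtain ⟨ε, hε, hε1, hεK⟩ : ∃ ε : ℝ, 0 < ε ∧ ε ≤ 1 ∧ ENNReal.ofReal (Cl * ε ^ p) * K ≤ 1 := by
    have hlim : Tendsto (fun ε : ℝ => ENNReal.ofReal (Cl * ε ^ p) * K) (𝓝[>] 0) (𝓝 0) := by
      have : Tendsto (fun ε : ℝ => Cl * ε ^ p) (𝓝[>] 0) (𝓝 0) := by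
        simpa [Real.zero_rpow hp.ne'] using
          (((Real.continuousAt_rpow_const 0 p (Or.inr hp.le)).const_mul Cl).tendsto).mono_left
            nhdsWithin_le_nhds
      simpa using ENNReal.Tendsto.mul_const (ENNReal.tendsto_ofReal this) (Or.inr hK)
    obtain ⟨ε, hεK, hε⟩ :=
      ((hlim.eventually (gt_mem_nhds one_pos)).and (Ioc_mem_nhdsGT one_pos)).exists
    exact ⟨ε, hε.1, hε.2, hεK.le⟩
  refine ⟨ε, hε, ofReal_mul_luxNorm_le hε fun l hl hsl => ?_⟩
  rw [lintegral_ofReal_indicator_div h0 hs] at hsl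
  rw [lintegral_ofReal_indicator_div h0 ht]
  calc ∫⁻ x in t, ENNReal.ofReal (φ x (l / ε)⁻¹) ∂μ
      ≤ ∫⁻ x in t, ENNReal.ofReal (Cl * ε ^ p) * ENNReal.ofReal (φ x l⁻¹) ∂μ := by
        refine lintegral_mono fun x => ?_
        rw [← ENNReal.ofReal_mul (by positivity), inv_div, div_eq_mul_inv]
        exact ENNReal.ofReal_le_ofReal (hlow x ε l⁻¹ hε.le hε1 (by positivity))
    _ = ENNReal.ofReal (Cl * ε ^ p) * ∫⁻ x in t, ENNReal.ofReal (φ x l⁻¹) ∂μ :=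
        lintegral_const_mul' _ _ ENNReal.ofReal_ne_top
    _ ≤ ENNReal.ofReal (Cl * ε ^ p) * (K * 1) := by
        gcongr
        exact (hcmp _ (inv_pos.2 hl)).trans (by gcongr)
    _ ≤ 1 := by rwa [mul_one]

theorem exists_toReal_inv_luxNorm_indicator_le (h0 : ∀ x, φ x 0 = 0)
    (hpos : ∀ x τ, 0 < τ → 0 < φ x τ) (hmeas : ∀ τ : ℝ, Measurable fun x => φ x τ)
    (hp : 0 < p) (hCl : 0 < Cl)
    (hlow : ∀ x (u τ : ℝ), 0 ≤ u → u ≤ 1 → 0 ≤ τ → φ x (u * τ) ≤ Cl * u ^ p * φ x τ)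
    (hq : 1 < q)
    (hA : ∀ τ > 0, (∫⁻ x in t, ENNReal.ofReal (φ x τ) ∂μ) *
      (∫⁻ x in t, ENNReal.ofReal (φ x τ) ^ (1 - q / (q - 1)) ∂μ) ^ (q - 1) ≤
        ENNReal.ofReal A * μ t ^ q)
    (hs : MeasurableSet s) (ht : MeasurableSet t) (hst : s ⊆ t) (hs0 : μ s ≠ 0)
    (hstop : μ s ≠ ⊤) (httop : μ t ≠ ⊤) :
    ∃ C > 0, (luxNorm μ φ (s.indicator fun _ => 1))⁻¹.toReal ≤
      C * (luxNorm μ φ (t.indicator fun _ => 1))⁻¹.toReal := by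
  have hK : ENNReal.ofReal A * μ t ^ q / μ s ^ q ≠ ⊤ :=
    ENNReal.div_ne_top (by finiteness) (ENNReal.rpow_pos (pos_iff_ne_zero.2 hs0) hstop).ne'
  have hcmp (τ : ℝ) (hτ : 0 < τ) := setLIntegral_le_mul_setLIntegral_of_muckenhoupt hst hs0 hstop
    (hmeas τ).ennreal_ofReal.aemeasurable (fun x => (ENNReal.ofReal_pos.2 (hpos x τ hτ)).ne')
    (fun _ => ENNReal.ofReal_ne_top) hq (hA τ hτ)
  obtain ⟨ε, hε, hεt⟩ := exists_ofReal_mul_luxNorm_indicator_le h0 hp hCl hlow hs ht hK hcmp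
  exact ⟨ε⁻¹, inv_pos.2 hε,
    ENNReal.toReal_inv_le_inv_mul_toReal_inv hε hεt (luxNorm_indicator_mono h0 hst)⟩

end Luxemburg

theorem measureReal_ball_pos {X : Type*} [PseudoMetricSpace X] [ProperSpace X]
    [MeasurableSpace X] [OpensMeasurableSpace X] (μ : Measure X) [μ.IsOpenPosMeasure]
    [IsFiniteMeasureOnCompacts μ] (x : X) {r : ℝ} (hr : 0 < r) :
    0 < μ.real (ball x r) :=
  ENNReal.toReal_pos (measure_ball_pos μ x hr).ne' measure_ball_lt_top.ne

section CorrectedAtom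

variable {n : ℕ} {a : EuclideanSpace ℝ (Fin n) → ℝ} {x₀ x₁ : EuclideanSpace ℝ (Fin n)}
  {r₀ r₁ : ℝ}

theorem tildeAtom_of_notMem_ball {x : EuclideanSpace ℝ (Fin n)} (hx : x ∉ ball x₁ r₁) :
    tildeAtom a x₀ r₀ x₁ r₁ x = a x := by
  simp [tildeAtom, hx]

theorem integral_tildeAtom (hr₁ : 0 < r₁) (ha : Integrable a)
    (hsupp : ∀ x ∉ ball x₀ r₀, a x = 0) :
    ∫ x, tildeAtom a x₀ r₀ x₁ r₁ x = 0 := by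
  have hv : volume.real (ball x₁ r₁) ≠ 0 := (measureReal_ball_pos volume x₁ hr₁).ne'
  have hind : Integrable ((ball x₁ r₁).indicator fun _ => (1 : ℝ)) :=
    (integrableOn_const measure_ball_lt_top.ne).integrable_indicator measurableSet_ball
  simp only [tildeAtom]
  rw [integral_sub ha ((hind.const_mul _).div_const _), integral_div, integral_const_mul,
    integral_indicator_const _ measurableSet_ball,
    setIntegral_eq_integral_of_forall_compl_eq_zero hsupp, ← measureReal_def, smul_eq_mul, mul_one, mul_div_cancel_right₀ _ hv, sub_self]

theorem abs_tildeAtom_le {M : ℝ} (hr₁ : 0 < r₁) (hM : ∀ x, |a x| ≤ M)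
    (x : EuclideanSpace ℝ (Fin n)) :
    |tildeAtom a x₀ r₀ x₁ r₁ x| ≤
      M * (1 + volume.real (ball x₀ r₀) / volume.real (ball x₁ r₁)) := by
  have hM0 : 0 ≤ M := (abs_nonneg _).trans (hM 0)
  have hv : 0 < volume.real (ball x₁ r₁) := measureReal_ball_pos volume x₁ hr₁
  have hint : ‖∫ y in ball x₀ r₀, a y‖ ≤ M * volume.real (ball x₀ r₀) :=
    norm_setIntegral_le_of_norm_le_const measure_ball_lt_top fun y _ => hM y
  have hind : |(ball x₁ r₁).indicator (fun _ => (1 : ℝ)) x| ≤ 1 := by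
    by_cases hx : x ∈ ball x₁ r₁ <;> simp [hx]
  simp only [tildeAtom, ← measureReal_def]
  calc _ ≤ |a x| + |∫ y in ball x₀ r₀, a y| * |(ball x₁ r₁).indicator (fun _ => (1 : ℝ)) x| /
          volume.real (ball x₁ r₁) := by
        rw [← abs_mul, ← abs_of_pos hv, ← abs_div, abs_of_pos hv]
        exact abs_sub _ _
    _ ≤ M + M * volume.real (ball x₀ r₀) * 1 / volume.real (ball x₁ r₁) := by
        gcongr
        exacts [hM x, hint]
    _ = _ := by ring

end CorrectedAtom

theorem corrected_atom_properties_general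
    {n : ℕ} (Ω : Set (EuclideanSpace ℝ (Fin n)))
    (φ : EuclideanSpace ℝ (Fin n) → ℝ → ℝ)
    (h0 : ∀ x, φ x 0 = 0)
    (hposφ : ∀ x t, 0 < t → 0 < φ x t)
    (hmeas : ∀ t : ℝ, Measurable fun x => φ x t)
    (p : ℝ) (hp : 0 < p)
    (Cl : ℝ) (hCl : 0 < Cl)
    (hlow : ∀ x (s t : ℝ), 0 ≤ s → s ≤ 1 → 0 ≤ t → φ x (s * t) ≤ Cl * s ^ p * φ x t)
    (qA : ℝ) (hqA : 1 < qA) (AA : ℝ)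
    (hAq : ∀ t : ℝ, 0 < t → ∀ (x : EuclideanSpace ℝ (Fin n)) (ρ : ℝ), 0 < ρ →
      (∫⁻ y in ball x ρ, ENNReal.ofReal (φ y t)) *
        (∫⁻ y in ball x ρ, ENNReal.ofReal (φ y t) ^ (1 - qA / (qA - 1))) ^ (qA - 1) ≤
          ENNReal.ofReal AA * volume (ball x ρ) ^ qA)
    (x₀ : EuclideanSpace ℝ (Fin n)) (r₀ : ℝ) (hr₀ : 0 < r₀)
    (x₁ : EuclideanSpace ℝ (Fin n)) (r₁ : ℝ) (hr₁ : 0 < r₁)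
    (c : ℝ) (hc : 1 ≤ c)
    (hball : ball x₁ r₁ ⊆ Ωᶜ)
    (hcomp₂ : r₁ ≤ c * r₀) (hdist : dist x₀ x₁ ≤ c * r₀)
    (a : EuclideanSpace ℝ (Fin n) → ℝ) (ham : Measurable a)
    (hasupp : ∀ x, x ∉ ball x₀ r₀ → a x = 0)
    (habd : ∀ x, |a x| ≤
      ((luxNorm volume φ (Set.indicator (ball x₀ r₀) fun _ => (1 : ℝ)))⁻¹).toReal) :
    (∫ x, tildeAtom a x₀ r₀ x₁ r₁ x) = 0 ∧
    (∀ x, x ∉ ball x₀ (3 * c * r₀) → tildeAtom a x₀ r₀ x₁ r₁ x = 0) ∧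
    (∃ C : ℝ, 0 < C ∧ ∀ x, |tildeAtom a x₀ r₀ x₁ r₁ x| ≤
      C * ((luxNorm volume φ
        (Set.indicator (ball x₀ (3 * c * r₀)) fun _ => (1 : ℝ)))⁻¹).toReal) ∧
    (∀ x ∈ Ω, tildeAtom a x₀ r₀ x₁ r₁ x = a x) := by
  have hρ : 0 < 3 * c * r₀ := by positivity
  have hsub₀ : ball x₀ r₀ ⊆ ball x₀ (3 * c * r₀) := ball_subset_ball (by nlinarith)
  have hsub₁ : ball x₁ r₁ ⊆ ball x₀ (3 * c * r₀) :=
    ball_subset_ball' (by rw [dist_comm]; nlinarith)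
  have hsuppa : Function.support a ⊆ ball x₀ r₀ := fun x hx => by_contra fun h => hx (hasupp x h)
  have ha : Integrable a :=
    (integrableOn_iff_integrable_of_support_subset hsuppa).1 <|
      Measure.integrableOn_of_bounded measure_ball_lt_top.ne ham.aestronglyMeasurable
        (ae_of_all _ habd)
  obtain ⟨C, hC, hCB⟩ := exists_toReal_inv_luxNorm_indicator_le h0 hposφ hmeas hp hCl hlow hqA
    (fun τ hτ => hAq τ hτ x₀ _ hρ) measurableSet_ball measurableSet_ball hsub₀
    (measure_ball_pos _ _ hr₀).ne' measure_ball_lt_top.ne measure_ball_lt_top.ne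
  refine ⟨integral_tildeAtom hr₁ ha hasupp, fun x hx => ?_,
    ⟨C * (1 + volume.real (ball x₀ r₀) / volume.real (ball x₁ r₁)), by positivity,
      fun x => (abs_tildeAtom_le hr₁ habd x).trans ?_⟩,
    fun x hx => tildeAtom_of_notMem_ball fun hx₁ => hball hx₁ hx⟩
  · rw [tildeAtom_of_notMem_ball fun h => hx (hsub₁ h)]
    exact hasupp x fun h => hx (hsub₀ h)
  · calc _ ≤ C * _ * (1 + volume.real (ball x₀ r₀) / volume.real (ball x₁ r₁)) := by gcongr
      _ = _ := by ring

/-- Correcting an `L^∞` atom on a ball `B₀` near the boundary of `Ω` by a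
multiple of the normalized indicator of a comparable ball `B̃₀ ⊆ Ω^∁` produces a function
`ã` with vanishing integral, support in `C̃B₀`, the expected `L^∞` bound, and `ã = a`
on `Ω`. -/
theorem corrected_atom_properties
    {n : ℕ} (Ω : Set (EuclideanSpace ℝ (Fin n)))
    (hΩo : IsOpen Ω) (hΩc : ¬ Bornology.IsBounded Ωᶜ)
    (φ : EuclideanSpace ℝ (Fin n) → ℝ → ℝ)
    (hnn : ∀ x t, 0 ≤ t → 0 ≤ φ x t)
    (hmono : ∀ x, MonotoneOn (φ x) (Set.Ici 0))
    (h0 : ∀ x, φ x 0 = 0)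
    (hposφ : ∀ x t, 0 < t → 0 < φ x t)
    (hlim : ∀ x, Tendsto (φ x) atTop atTop)
    (hmeas : ∀ t : ℝ, Measurable fun x => φ x t)
    (p : ℝ) (hp : 0 < p) (hp1 : p ≤ 1)
    (Cl : ℝ) (hCl : 0 < Cl)
    (hlow : ∀ x (s t : ℝ), 0 ≤ s → s ≤ 1 → 0 ≤ t → φ x (s * t) ≤ Cl * s ^ p * φ x t)
    (Cu : ℝ) (hCu : 0 < Cu)
    (hup : ∀ x (s t : ℝ), 1 ≤ s → 0 ≤ t → φ x (s * t) ≤ Cu * s * φ x t)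
    (qA : ℝ) (hqA : 1 < qA) (AA : ℝ) (hAA : 0 < AA)
    (hAq : ∀ t : ℝ, 0 < t → ∀ (x : EuclideanSpace ℝ (Fin n)) (ρ : ℝ), 0 < ρ →
      (∫⁻ y in ball x ρ, ENNReal.ofReal (φ y t)) *
        (∫⁻ y in ball x ρ, ENNReal.ofReal (φ y t) ^ (1 - qA / (qA - 1))) ^ (qA - 1) ≤
          ENNReal.ofReal AA * volume (ball x ρ) ^ qA)
    (x₀ : EuclideanSpace ℝ (Fin n)) (r₀ : ℝ) (hr₀ : 0 < r₀) (hx₀ : x₀ ∈ Ω)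
    (x₁ : EuclideanSpace ℝ (Fin n)) (r₁ : ℝ) (hr₁ : 0 < r₁)
    (c : ℝ) (hc : 1 ≤ c)
    (hball : ball x₁ r₁ ⊆ Ωᶜ)
    (hcomp₁ : r₀ / c ≤ r₁) (hcomp₂ : r₁ ≤ c * r₀) (hdist : dist x₀ x₁ ≤ c * r₀)
    (a : EuclideanSpace ℝ (Fin n) → ℝ) (ham : Measurable a)
    (hasupp : ∀ x, x ∉ ball x₀ r₀ → a x = 0)
    (habd : ∀ x, |a x| ≤
      ((luxNorm volume φ (Set.indicator (ball x₀ r₀) fun _ => (1 : ℝ)))⁻¹).toReal) :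
    (∫ x, tildeAtom a x₀ r₀ x₁ r₁ x) = 0 ∧
    (∀ x, x ∉ ball x₀ (3 * c * r₀) → tildeAtom a x₀ r₀ x₁ r₁ x = 0) ∧
    (∃ C : ℝ, 0 < C ∧ ∀ x, |tildeAtom a x₀ r₀ x₁ r₁ x| ≤
      C * ((luxNorm volume φ
        (Set.indicator (ball x₀ (3 * c * r₀)) fun _ => (1 : ℝ)))⁻¹).toReal) ∧
    (∀ x ∈ Ω, tildeAtom a x₀ r₀ x₁ r₁ x = a x) :=
  corrected_atom_properties_general Ω φ h0 hposφ hmeas p hp Cl hCl hlow qA hqA AA hAq x₀ r₀ hr₀ x₁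
    r₁ hr₁ c hc hball hcomp₂ hdist a ham hasupp habd
end
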